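/- arXiv:1309.0571 — 12 statements merged into one kernel-verified Lean document; each statement's English description precedes it below -/
import Mathlib

section
/- Let M be a join-semilattice with a greatest element ⊤, let t ≥ 1 be an integer, and let P be a monotone, multilinear predicate on t-tuples of elements of M. Let m be an integer with 1 ≤ m ≤ t, and let 𝒩 be a nonempty finite subset of M such that P(N,…,N,⊤,…,⊤) holds for every N ∈ 𝒩 (with N repeated m times and ⊤ repeated t−m times). Let N̂ be any lower bound of 𝒩 in M and let Ĝ be the supremum of 𝒩. Then P(N̂,…,N̂,Ĝ,…,Ĝ) holds, with N̂ repeated m−1 times and Ĝ repeated t−m+1 times. -/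
/-- A predicate on `t`-tuples of elements of a preorder is *monotone* if it is preserved
by replacing each argument with a smaller one. -/
def MonotonePred {L : Type*} [Preorder L] {t : ℕ} (P : (Fin t → L) → Prop) : Prop :=
  ∀ N N' : Fin t → L, (∀ i, N' i ≤ N i) → P N → P N'

/-- A predicate on `t`-tuples of elements of a join-semilattice is *multilinear* if, in each
coordinate, it is preserved by taking the join of two admissible values. -/
def MultilinearPred {L : Type*} [SemilatticeSup L] {t : ℕ} (P : (Fin t → L) → Prop) : Prop :=
  ∀ (N : Fin t → L) (i : Fin t) (a b : L),
    P (Function.update N i a) → P (Function.update N i b) →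
      P (Function.update N i (a ⊔ b))

/-!
Write `G` for the join of `𝒩`. Sweep a single free slot from position `m - 1` to the end of
the tuple: at each stage the tuple is `N̂` before position `m - 1`, `G` up to the slot, an
arbitrary `N ∈ 𝒩` in the slot and `⊤` after it. Multilinearity in the slot turns the
family over `N ∈ 𝒩` into `G` there, and monotonicity lowers the next `⊤` to `N`, opening the
next slot. The initial stage is dominated by `P(N,…,N,⊤,…,⊤)`, and closing the last slot
gives `P(N̂,…,N̂,G,…,G)`.
-/

theorem MultilinearPred.update_sup' {M ι : Type*} [SemilatticeSup M] {t : ℕ}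
    {P : (Fin t → M) → Prop} (hmulti : MultilinearPred P) (x : Fin t → M) (i : Fin t)
    {s : Finset ι} (hs : s.Nonempty) (f : ι → M)
    (h : ∀ a ∈ s, P (Function.update x i (f a))) :
    P (Function.update x i (s.sup' hs f)) := by
  induction hs using Finset.Nonempty.cons_induction with
  | singleton a => simpa using h a (Finset.mem_singleton_self a)
  | cons a s ha hs ih =>
    rw [Finset.sup'_cons hs]
    exact hmulti x i _ _ (h a (Finset.mem_cons_self a s))
      (ih fun b hb => h b (Finset.mem_cons_of_mem hb))

def slotTuple {M : Type*} [Top M] {t : ℕ} (y : Fin t → M) (j : ℕ) (a : M) : Fin t → M :=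
  fun i => if (i : ℕ) < j then y i else if (i : ℕ) = j then a else ⊤

section Sweep

variable {M : Type*} {t : ℕ}

theorem slotTuple_of_le [Top M] {y : Fin t → M} {j : ℕ} (hj : t ≤ j) (a : M) :
    slotTuple y j a = y := by
  funext i
  simp [slotTuple, i.isLt.trans_le hj]

theorem update_slotTuple [Top M] {y : Fin t → M} {j : ℕ} (hj : j < t) (a b : M) :
    Function.update (slotTuple y j a) ⟨j, hj⟩ b = slotTuple y j b := by
  funext i
  rcases eq_or_ne i ⟨j, hj⟩ with rfl | hi
  · simp [slotTuple]
  · have hij : (i : ℕ) ≠ j := fun h => hi (Fin.ext h)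
    simp [Function.update_of_ne hi, slotTuple, hij]

theorem slotTuple_succ_le [Preorder M] [OrderTop M] {y : Fin t → M} {j : ℕ} (hj : j < t)
    (a : M) :
    slotTuple y (j + 1) a ≤ slotTuple y j (y ⟨j, hj⟩) := by
  intro i
  have hij : (i : ℕ) = j → i = ⟨j, hj⟩ := fun h => Fin.ext h
  simp only [slotTuple]
  split_ifs <;> first | omega | simp_all

variable [SemilatticeSup M] [OrderTop M] {P : (Fin t → M) → Prop}

theorem MultilinearPred.of_forall_mem_slotTuple (hmulti : MultilinearPred P)
    (hmono : MonotonePred P) {s : Finset M} (hs : s.Nonempty) (y : Fin t → M) (j : ℕ)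
    (hy : ∀ i : Fin t, j ≤ i → y i = s.sup' hs id) (h : ∀ N ∈ s, P (slotTuple y j N)) :
    P y := by
  rcases le_or_gt t j with hj | hj
  · obtain ⟨N, hN⟩ := hs
    simpa [slotTuple_of_le hj] using h N hN
  have hjoin : P (slotTuple y j (y ⟨j, hj⟩)) := by
    rw [hy ⟨j, hj⟩ le_rfl, ← update_slotTuple hj ⊤]
    exact hmulti.update_sup' _ _ hs id fun N hN => by rw [update_slotTuple]; exact h N hN
  exact hmulti.of_forall_mem_slotTuple hmono hs y (j + 1) (fun i hi => hy i (by omega))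
    fun N _ => hmono _ _ (slotTuple_succ_le hj N) hjoin
termination_by t - j

end Sweep

theorem stmt_0_general {M : Type*} [SemilatticeSup M] [OrderTop M] {t : ℕ}
    (P : (Fin t → M) → Prop) (hmono : MonotonePred P) (hmulti : MultilinearPred P)
    {m : ℕ}
    (𝒩 : Finset M) (h𝒩 : 𝒩.Nonempty)
    (hP : ∀ N ∈ 𝒩, P (fun i => if (i : ℕ) < m then N else ⊤))
    (Nhat : M) (hNhat : ∀ N ∈ 𝒩, Nhat ≤ N) :
    P (fun i => if (i : ℕ) < m - 1 then Nhat else 𝒩.sup' h𝒩 id) := by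
  refine hmulti.of_forall_mem_slotTuple hmono h𝒩 _ (m - 1) (fun i hi => by simp [hi.not_gt])
    fun N hN => hmono _ _ (fun i => ?_) (hP N hN)
  simp only [slotTuple]
  split_ifs <;> first | omega | simp_all

/-- **Lemma 1.** If `P(N,…,N,⊤,…,⊤)` (with `N` repeated `m` times) holds for every `N` in a
nonempty finite family `𝒩`, then `P(N̂,…,N̂,Ĝ,…,Ĝ)` (with `N̂` repeated `m - 1` times) holds,
where `N̂` is any lower bound of `𝒩` and `Ĝ = sup 𝒩`. -/
theorem stmt_0 {M : Type*} [SemilatticeSup M] [OrderTop M] {t : ℕ} (ht : 1 ≤ t)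
    (P : (Fin t → M) → Prop) (hmono : MonotonePred P) (hmulti : MultilinearPred P)
    {m : ℕ} (hm1 : 1 ≤ m) (hmt : m ≤ t)
    (𝒩 : Finset M) (h𝒩 : 𝒩.Nonempty)
    (hP : ∀ N ∈ 𝒩, P (fun i => if (i : ℕ) < m then N else ⊤))
    (Nhat : M) (hNhat : ∀ N ∈ 𝒩, Nhat ≤ N) :
    P (fun i => if (i : ℕ) < m - 1 then Nhat else 𝒩.sup' h𝒩 id) :=
  stmt_0_general P hmono hmulti 𝒩 h𝒩 hP Nhat hNhat
end

section
/- Let L be a lattice and let k, l ≥ 1 be integers. Let Q be a monotone, multilinear predicate on k-tuples of elements of L, and for each i ∈ {1,…,k} let Rᵢ be a predicate taking an l-tuple of elements of L (the first row) and one element of L (the second row) such that: Rᵢ is monotone and multilinear in the first row for each fixed second row, and for each fixed first row v, Rᵢ(v, M) together with M ≤ M' implies Rᵢ(v, M'), and Rᵢ(v, M') together with Rᵢ(v, M'') implies Rᵢ(v, M' ⊓ M''). Define the composition Q∘R on kl-tuples (N₁,…,N_{kl}) of elements of L by: Q∘R(N₁,…,N_{kl}) holds iff there exist M₁,…,M_k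 ∈ L with Q(M₁,…,M_k) and Rᵢ(N_{(i−1)l+1},…,N_{il}, Mᵢ) for each i ∈ {1,…,k}. Then Q∘R is monotone and multilinear. -/
/-- The index `(i-1)l + j` (0-indexed: `i*l + j`) of the `j`-th entry of the `i`-th block
in a `kl`-tuple split into `k` blocks of length `l`. -/
def blockIdx {k l : ℕ} (i : Fin k) (j : Fin l) : Fin (k * l) :=
  ⟨(i : ℕ) * l + (j : ℕ), by
    have h1 : (i : ℕ) * l + (j : ℕ) < ((i : ℕ) + 1) * l := by
      rw [add_mul, one_mul]; exact Nat.add_lt_add_left j.isLt _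
    exact lt_of_lt_of_le h1 (Nat.mul_le_mul_right l (Nat.succ_le_of_lt i.isLt))⟩

/-- The *composition* `Q∘R`: it holds of a `kl`-tuple `(N₁,…,N_{kl})` iff there are
`M₁,…,M_k` with `Q(M₁,…,M_k)` and `Rᵢ(N_{(i-1)l+1},…,N_{il}, Mᵢ)` for each `i`. -/
def compPred {L : Type*} [Lattice L] {k l : ℕ} (Q : (Fin k → L) → Prop)
    (R : ∀ _ : Fin k, (Fin l → L) → L → Prop) : (Fin (k * l) → L) → Prop :=
  fun Ns => ∃ M : Fin k → L, Q M ∧ ∀ i : Fin k, R i (fun j => Ns (blockIdx i j)) (M i)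

/-! The monotonicity of `Q∘R` is inherited row by row from the `Rᵢ`. For multilinearity, let
the two tuples differ only at an entry of block `i`, with witnesses `M'` and `M''`. Take
`M' i ⊔ M'' i` in block `i`, where `Rᵢ` is comonotone in the second row and multilinear in the
first, and `M' i' ⊓ M'' i'` in every other block, whose rows are unchanged so that colinearity of
`Rᵢ'` applies; `Q` accepts this tuple by monotonicity and multilinearity. -/

open Function

section Blocks

variable {k l : ℕ}

theorem blockIdx_eq_finProdFinEquiv (i : Fin k) (j : Fin l) :
    blockIdx i j = finProdFinEquiv (i, j) := by
  ext
  simp only [blockIdx, finProdFinEquiv_apply_val]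
  ring

theorem blockIdx_injective (i : Fin k) : Injective (blockIdx (l := l) i) := fun j j' h => by
  simp only [blockIdx_eq_finProdFinEquiv, EmbeddingLike.apply_eq_iff_eq, Prod.mk.injEq] at h
  exact h.2

theorem blockIdx_ne_of_ne {i i' : Fin k} (h : i' ≠ i) (j' j : Fin l) :
    blockIdx i' j' ≠ blockIdx i j := by
  simp only [blockIdx_eq_finProdFinEquiv, ne_eq, EmbeddingLike.apply_eq_iff_eq, Prod.mk.injEq,
    h, false_and, not_false_eq_true]

theorem exists_blockIdx_eq (p : Fin (k * l)) : ∃ i j, blockIdx i j = p := by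
  obtain ⟨⟨i, j⟩, rfl⟩ := finProdFinEquiv.surjective p
  exact ⟨i, j, blockIdx_eq_finProdFinEquiv i j⟩

variable {α : Type*}

theorem row_update_blockIdx_self (N : Fin (k * l) → α) (i : Fin k) (j : Fin l) (x : α) :
    (fun j' => update N (blockIdx i j) x (blockIdx i j')) =
      update (fun j' => N (blockIdx i j')) j x :=
  update_comp_eq_of_injective' N (blockIdx_injective i) j x

theorem row_update_blockIdx_of_ne (N : Fin (k * l) → α) {i i' : Fin k} (h : i' ≠ i)
    (j : Fin l) (x : α) :
    (fun j' => update N (blockIdx i j) x (blockIdx i' j')) = fun j' => N (blockIdx i' j') :=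
  update_comp_eq_of_forall_ne' N x fun j' => blockIdx_ne_of_ne h j' j

end Blocks

section Lattice

variable {L : Type*} [Lattice L]

theorem MultilinearPred.update_inf_sup {t : ℕ} {Q : (Fin t → L) → Prop}
    (hmulti : MultilinearPred Q) (hmono : MonotonePred Q) {M' M'' : Fin t → L} (i : Fin t)
    (h' : Q M') (h'' : Q M'') : Q (update (M' ⊓ M'') i (M' i ⊔ M'' i)) :=
  hmulti _ i _ _ (hmono _ _ (update_le_iff.2 ⟨le_rfl, fun _ _ => inf_le_left⟩) h')
    (hmono _ _ (update_le_iff.2 ⟨le_rfl, fun _ _ => inf_le_right⟩) h'')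

section Composition

variable {k l : ℕ} {Q : (Fin k → L) → Prop} {R : ∀ _ : Fin k, (Fin l → L) → L → Prop}

theorem MonotonePred.compPred (hRmono : ∀ i M, MonotonePred (fun v => R i v M)) :
    MonotonePred (compPred Q R) := by
  rintro N N' hle ⟨M, hQ, hR⟩
  exact ⟨M, hQ, fun i => hRmono i (M i) _ _ (fun j => hle _) (hR i)⟩

theorem MultilinearPred.compPred (hQmono : MonotonePred Q) (hQmulti : MultilinearPred Q)
    (hRmulti : ∀ i M, MultilinearPred (fun v => R i v M))
    (hRcomono : ∀ i v M M', M ≤ M' → R i v M → R i v M')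
    (hRcolin : ∀ i v M' M'', R i v M' → R i v M'' → R i v (M' ⊓ M'')) :
    MultilinearPred (compPred Q R) := by
  rintro N p a b ⟨M', hQ', hR'⟩ ⟨M'', hQ'', hR''⟩
  obtain ⟨i, j, rfl⟩ := exists_blockIdx_eq p
  refine ⟨update (M' ⊓ M'') i (M' i ⊔ M'' i), hQmulti.update_inf_sup hQmono i hQ' hQ'',
    fun i' => ?_⟩
  rcases eq_or_ne i' i with rfl | hne
  · have ha := hRcomono i' _ _ (M' i' ⊔ M'' i') le_sup_left (hR' i')
    have hb := hRcomono i' _ _ (M' i' ⊔ M'' i') le_sup_right (hR'' i')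
    rw [row_update_blockIdx_self] at ha hb ⊢
    rw [update_self]
    exact hRmulti i' _ _ j a b ha hb
  · have ha := hR' i'
    have hb := hR'' i'
    rw [row_update_blockIdx_of_ne _ hne] at ha hb ⊢
    rw [update_of_ne hne]
    exact hRcolin i' _ _ _ ha hb

end Composition

end Lattice

theorem stmt_4_general {L : Type*} [Lattice L] {k l : ℕ}
    (Q : (Fin k → L) → Prop) (hQmono : MonotonePred Q) (hQmulti : MultilinearPred Q)
    (R : ∀ _ : Fin k, (Fin l → L) → L → Prop)
    (hRmono : ∀ (i : Fin k) (M : L), MonotonePred (fun v => R i v M))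
    (hRmulti : ∀ (i : Fin k) (M : L), MultilinearPred (fun v => R i v M))
    (hRcomono : ∀ (i : Fin k) (v : Fin l → L) (M M' : L), M ≤ M' → R i v M → R i v M')
    (hRcolin : ∀ (i : Fin k) (v : Fin l → L) (M' M'' : L),
      R i v M' → R i v M'' → R i v (M' ⊓ M'')) :
    MonotonePred (compPred Q R) ∧ MultilinearPred (compPred Q R) :=
  ⟨MonotonePred.compPred hRmono,
    MultilinearPred.compPred hQmono hQmulti hRmulti hRcomono hRcolin⟩

/-- **Composition Lemma.** If `Q` is monotone and multilinear, and each `Rᵢ` is monotone and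
multilinear in its first row, comonotone and colinear in its second row, then the composition
`Q∘R` is monotone and multilinear. -/
theorem stmt_4 {L : Type*} [Lattice L] {k l : ℕ} (hk : 1 ≤ k) (hl : 1 ≤ l)
    (Q : (Fin k → L) → Prop) (hQmono : MonotonePred Q) (hQmulti : MultilinearPred Q)
    (R : ∀ _ : Fin k, (Fin l → L) → L → Prop)
    (hRmono : ∀ (i : Fin k) (M : L), MonotonePred (fun v => R i v M))
    (hRmulti : ∀ (i : Fin k) (M : L), MultilinearPred (fun v => R i v M))
    (hRcomono : ∀ (i : Fin k) (v : Fin l → L) (M M' : L), M ≤ M' → R i v M → R i v M')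
    (hRcolin : ∀ (i : Fin k) (v : Fin l → L) (M' M'' : L),
      R i v M' → R i v M'' → R i v (M' ⊓ M'')) :
    MonotonePred (compPred Q R) ∧ MultilinearPred (compPred Q R) :=
  stmt_4_general Q hQmono hQmulti R hRmono hRmulti hRcomono hRcolin
end

section
/- Let G be a group, let l ≥ 1 be an integer, and let Q be a monotone, multilinear predicate on l-tuples of normal subgroups of G (with respect to the lattice of normal subgroups of G ordered by inclusion). Let 𝓒 be a class of groups which is both radical and a formation. Then there exists a monotone, multilinear predicate P on l-tuples of normal subgroups of G such that for every normal subgroup N of G, P(N,…,N) holds if and only if there exists a normal subgroup M of G with M ≤ N, Q(M,…,M), and with the quotient group N/M lying in 𝓒. -/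
/-!
Take `P(N₁, …, N_l)` to say that there are normal subgroups `Mᵢ` with `Q(M₁, …, M_l)` and
`Nᵢ/(Nᵢ ∩ Mᵢ) ∈ 𝓒` for all `i`, i.e. the image of `Nᵢ` in `G/Mᵢ` lies in `𝓒`. Monotonicity
keeps the `Mᵢ`: the image of a smaller normal `N'ᵢ` is a normal subgroup of that of `Nᵢ`. For
multilinearity in slot `i`, use `Mᵢ^A ⊔ Mᵢ^B` in slot `i` (the image of `A ⊔ B` is the product
of the images of `A` and `B`) and `Mⱼ^A ⊓ Mⱼ^B` elsewhere (`N/(N ∩ M ∩ M')` is a subdirect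
product of `N/(N ∩ M)` and `N/(N ∩ M')`). On the diagonal, replace the `Mᵢ` by
`N ∩ M₁ ∩ ⋯ ∩ M_l`.
-/

universe u

/-- A *class of groups*: a predicate on groups in a fixed universe. -/
abbrev GroupClass : Type (u + 1) := ∀ (H : Type u) [Group H], Prop

/-- A class of groups is invariant under group isomorphism. -/
def IsoClosed (C : GroupClass.{u}) : Prop :=
  ∀ (A B : Type u) [Group A] [Group B], (A ≃* B) → C A → C B

/-- A class of groups is *radical* if it is closed under normal subgroups and under
products of two normal subgroups. -/
def IsRadicalClass (C : GroupClass.{u}) : Prop :=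
  (∀ (A : Type u) [Group A] (K : Subgroup A), K.Normal → C A → C ↥K) ∧
  (∀ (A : Type u) [Group A] (K₁ K₂ : Subgroup A), K₁.Normal → K₂.Normal →
    K₁ ⊔ K₂ = ⊤ → C ↥K₁ → C ↥K₂ → C A)

/-- A class of groups is a *formation* if it is closed under quotients and under
subdirect products of two groups. -/
def IsFormation (C : GroupClass.{u}) : Prop :=
  (∀ (A : Type u) [Group A] (K : Subgroup A) [K.Normal], C A → C (A ⧸ K)) ∧
  (∀ (A B : Type u) [Group A] [Group B] (K : Subgroup (A × B)),
    (Function.Surjective fun k : ↥K => (k : A × B).1) →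
    (Function.Surjective fun k : ↥K => (k : A × B).2) →
    C A → C B → C ↥K)

/-- `quotInClass C N M hM` says that the quotient group `N/(N ∩ M)` lies in the class `C`.
When `M ≤ N`, this is the quotient group `N/M`. -/
def quotInClass (C : GroupClass.{u}) {G : Type u} [Group G]
    (N M : Subgroup G) (hM : M.Normal) : Prop :=
  haveI : ((N ⊓ M).subgroupOf N).Normal := by
    constructor
    intro x hx g
    simp only [Subgroup.mem_subgroupOf, Subgroup.mem_inf] at hx ⊢
    push_cast
    exact ⟨mul_mem (mul_mem g.2 hx.1) (inv_mem g.2), hM.conj_mem _ hx.2 _⟩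
  C (↥N ⧸ (N ⊓ M).subgroupOf N)

/-- A predicate on `l`-tuples of normal subgroups of `G` is *monotone* if it is preserved by
replacing each entry with a smaller normal subgroup. -/
def MonoOnNormal {G : Type u} [Group G] {l : ℕ}
    (P : (Fin l → Subgroup G) → Prop) : Prop :=
  ∀ N N' : Fin l → Subgroup G, (∀ i, (N i).Normal) → (∀ i, (N' i).Normal) →
    (∀ i, N' i ≤ N i) → P N → P N'

/-- A predicate on `l`-tuples of normal subgroups of `G` is *multilinear* if, in each
coordinate, it is preserved by taking the join (product) of two admissible normal
subgroups. -/
def MultiOnNormal {G : Type u} [Group G] {l : ℕ}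
    (P : (Fin l → Subgroup G) → Prop) : Prop :=
  ∀ (N : Fin l → Subgroup G) (i : Fin l) (A B : Subgroup G),
    (∀ j, (N j).Normal) → A.Normal → B.Normal →
    P (Function.update N i A) → P (Function.update N i B) →
      P (Function.update N i (A ⊔ B))

open Subgroup QuotientGroup Function

section Classes

variable {C : GroupClass.{u}} {A : Type u} [Group A]

theorem GroupClass.quotient_congr {K K' : Subgroup A} [K.Normal] [K'.Normal] (h : K = K') :
    C (A ⧸ K) ↔ C (A ⧸ K') := by
  subst h
  rfl

theorem IsoClosed.iff (hiso : IsoClosed C) {B : Type u} [Group B] (e : A ≃* B) : C A ↔ C B :=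
  ⟨hiso A B e, hiso B A e.symm⟩

theorem IsRadicalClass.of_le (hrad : IsRadicalClass C) (hiso : IsoClosed C)
    {H K : Subgroup A} (hK : K.Normal) (hKH : K ≤ H) (hH : C H) : C K :=
  hiso _ _ (subgroupOfEquivOfLe hKH) (hrad.1 _ _ inferInstance hH)

theorem IsRadicalClass.sup (hrad : IsRadicalClass C) (hiso : IsoClosed C)
    {H K : Subgroup A} (hH : H.Normal) (hK : K.Normal) (hCH : C H) (hCK : C K) :
    C ↥(H ⊔ K) := by
  refine hrad.2 _ (H.subgroupOf (H ⊔ K)) (K.subgroupOf (H ⊔ K)) inferInstance inferInstance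
    ?_ (hiso _ _ (subgroupOfEquivOfLe le_sup_left).symm hCH)
    (hiso _ _ (subgroupOfEquivOfLe le_sup_right).symm hCK)
  rw [← subgroupOf_sup le_sup_left le_sup_right, subgroupOf_self]

theorem IsFormation.of_surjective (hform : IsFormation C) (hiso : IsoClosed C)
    {B : Type u} [Group B] {f : A →* B} (hf : Surjective f) (hA : C A) : C B :=
  hiso _ _ (quotientKerEquivOfSurjective f hf) (hform.1 _ _ hA)

theorem IsFormation.quotient_of_le (hform : IsFormation C) (hiso : IsoClosed C)
    {H K : Subgroup A} [H.Normal] [K.Normal] (hle : H ≤ K) (hH : C (A ⧸ H)) : C (A ⧸ K) :=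
  hform.of_surjective hiso (map_surjective_of_surjective H K (MonoidHom.id A)
    (mk'_surjective K) hle) hH

theorem IsFormation.quotient_inf (hform : IsFormation C) (hiso : IsoClosed C)
    {H K : Subgroup A} [H.Normal] [K.Normal] (hH : C (A ⧸ H)) (hK : C (A ⧸ K)) :
    C (A ⧸ (H ⊓ K)) := by
  set f := (mk' H).prod (mk' K)
  have hker : f.ker = H ⊓ K := by rw [MonoidHom.ker_prod, ker_mk', ker_mk']
  have hrange : C f.range := by
    refine hform.2 _ _ f.range ?_ ?_ hH hK <;> intro q <;>
      obtain ⟨a, rfl⟩ := mk'_surjective _ q <;> exact ⟨⟨f a, a, rfl⟩, rfl⟩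
  exact hiso _ _ ((quotientKerEquivRange f).symm.trans (quotientMulEquivOfEq hker)) hrange

end Classes

section QuotInClass

variable {C : GroupClass.{u}} {G : Type u} [Group G] {N M : Subgroup G}

theorem quotInClass_congr {M' : Subgroup G} (hM : M.Normal) (hM' : M'.Normal)
    (h : N ⊓ M = N ⊓ M') : quotInClass C N M hM ↔ quotInClass C N M' hM' := by
  unfold quotInClass
  congr! 2 <;> rw [h]

theorem quotInClass_iff_quotient [hM : M.Normal] :
    quotInClass C N M hM ↔ C (N ⧸ M.subgroupOf N) := by
  unfold quotInClass
  congr! 2 <;> exact inf_subgroupOf_left M N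

theorem quotInClass_iff_map (hiso : IsoClosed C) [hM : M.Normal] :
    quotInClass C N M hM ↔ C ↥(N.map (mk' M)) := by
  have hker : ((mk' M).subgroupMap N).ker = M.subgroupOf N := by
    rw [ker_subgroupMap, ker_mk']
  rw [quotInClass_iff_quotient, hiso.iff ((quotientMulEquivOfEq hker).symm.trans
    (quotientKerEquivOfSurjective _ (MonoidHom.subgroupMap_surjective _ _)))]

variable (C) in
def NormalQuotInClass (N M : Subgroup G) : Prop :=
  ∃ hM : M.Normal, quotInClass C N M hM

namespace NormalQuotInClass

theorem normal (h : NormalQuotInClass C N M) : M.Normal := h.1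

theorem of_le_left (hiso : IsoClosed C) (hrad : IsRadicalClass C) {N' : Subgroup G}
    (hN' : N'.Normal) (hle : N' ≤ N) : NormalQuotInClass C N M → NormalQuotInClass C N' M := by
  rintro ⟨hM, hC⟩
  rw [quotInClass_iff_map hiso] at hC
  exact ⟨hM, (quotInClass_iff_map hiso).2 <|
    hrad.of_le hiso (hN'.map _ (mk'_surjective M)) (map_mono hle) hC⟩

theorem sup_left (hiso : IsoClosed C) (hrad : IsRadicalClass C) {N' : Subgroup G}
    (hN : N.Normal) (hN' : N'.Normal) :
    NormalQuotInClass C N M → NormalQuotInClass C N' M → NormalQuotInClass C (N ⊔ N') M := by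
  rintro ⟨hM, hC⟩ ⟨_, hC'⟩
  rw [quotInClass_iff_map hiso] at hC hC'
  refine ⟨hM, (quotInClass_iff_map hiso).2 ?_⟩
  rw [Subgroup.map_sup]
  exact hrad.sup hiso (hN.map _ (mk'_surjective M)) (hN'.map _ (mk'_surjective M)) hC hC'

theorem mono_right (hiso : IsoClosed C) (hform : IsFormation C) {M' : Subgroup G}
    (hM' : M'.Normal) (hle : M ≤ M') : NormalQuotInClass C N M → NormalQuotInClass C N M' := by
  rintro ⟨hM, hC⟩
  rw [quotInClass_iff_quotient] at hC
  exact ⟨hM', quotInClass_iff_quotient.2 <| hform.quotient_of_le hiso (comap_mono hle) hC⟩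

theorem inf_right (hiso : IsoClosed C) (hform : IsFormation C) {M' : Subgroup G} :
    NormalQuotInClass C N M → NormalQuotInClass C N M' → NormalQuotInClass C N (M ⊓ M') := by
  rintro ⟨hM, hC⟩ ⟨hM', hC'⟩
  rw [quotInClass_iff_quotient] at hC hC'
  refine ⟨inferInstance, quotInClass_iff_quotient.2 ?_⟩
  exact (GroupClass.quotient_congr (comap_inf _ _ _)).2 (hform.quotient_inf hiso hC hC')

theorem inf_self_left (hN : N.Normal) :
    NormalQuotInClass C N M → NormalQuotInClass C N (N ⊓ M) := by
  rintro ⟨hM, hC⟩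
  exact ⟨inferInstance, (quotInClass_congr _ _ (inf_left_idem _ _)).2 hC⟩

theorem finset_inf (hiso : IsoClosed C) (hform : IsFormation C) {ι : Type*} {s : Finset ι}
    (hs : s.Nonempty) {M : ι → Subgroup G} (h : ∀ i ∈ s, NormalQuotInClass C N (M i)) :
    NormalQuotInClass C N (s.inf M) := by
  induction hs using Finset.Nonempty.cons_induction with
  | singleton i => simpa using h i
  | cons i s hi hs ih =>
    rw [Finset.inf_cons]
    exact (h i (by simp)).inf_right hiso hform (ih fun j hj => h j (by simp [hj]))

end NormalQuotInClass

end QuotInClass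

section Extension

variable {C : GroupClass.{u}} {G : Type u} [Group G] {l : ℕ} {Q : (Fin l → Subgroup G) → Prop}

theorem MonoOnNormal.update_of_le (hQ : MonoOnNormal Q) {M T : Fin l → Subgroup G}
    (hM : ∀ j, (M j).Normal) (hT : ∀ j, (T j).Normal) (hle : T ≤ M) (i : Fin l) (h : Q M) :
    Q (update T i (M i)) :=
  hQ M _ hM ((forall_update_iff T fun _ K => K.Normal).2 ⟨hM i, fun j _ => hT j⟩)
    ((forall_update_iff T fun j K => K ≤ M j).2 ⟨le_rfl, fun j _ => hle j⟩) h

variable (C Q) in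
def ExtendByClass (N : Fin l → Subgroup G) : Prop :=
  ∃ M : Fin l → Subgroup G, (∀ i, NormalQuotInClass C (N i) (M i)) ∧ Q M

theorem monoOnNormal_extendByClass (hiso : IsoClosed C) (hrad : IsRadicalClass C) :
    MonoOnNormal (ExtendByClass C Q) := by
  rintro N N' - hN' hle ⟨M, hM, hQM⟩
  exact ⟨M, fun i => (hM i).of_le_left hiso hrad (hN' i) (hle i), hQM⟩

theorem multiOnNormal_extendByClass (hiso : IsoClosed C) (hrad : IsRadicalClass C)
    (hform : IsFormation C) (hQmono : MonoOnNormal Q) (hQmulti : MultiOnNormal Q) :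
    MultiOnNormal (ExtendByClass C Q) := by
  rintro N i A B - hA hB ⟨MA, hMA, hQA⟩ ⟨MB, hMB, hQB⟩
  have hMAn : ∀ j, (MA j).Normal := fun j => (hMA j).normal
  have hMBn : ∀ j, (MB j).Normal := fun j => (hMB j).normal
  have hTn : ∀ j, ((MA ⊓ MB) j).Normal := fun j => normal_inf_normal (MA j) (MB j)
  refine ⟨update (MA ⊓ MB) i (MA i ⊔ MB i), fun j => ?_, ?_⟩
  · rcases eq_or_ne j i with rfl | hj
    · have hA' := hMA j
      have hB' := hMB j
      simp only [update_self] at hA' hB' ⊢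
      exact (hA'.mono_right hiso hform inferInstance le_sup_left).sup_left hiso hrad hA hB
        (hB'.mono_right hiso hform inferInstance le_sup_right)
    · have hA' := hMA j
      have hB' := hMB j
      simp only [update_of_ne hj] at hA' hB' ⊢
      exact hA'.inf_right hiso hform hB'
  · exact hQmulti _ i _ _ hTn (hMAn i) (hMBn i) (hQmono.update_of_le hMAn hTn inf_le_left i hQA)
      (hQmono.update_of_le hMBn hTn inf_le_right i hQB)

theorem extendByClass_const_iff (hiso : IsoClosed C) (hform : IsFormation C)
    (hQ : MonoOnNormal Q) [NeZero l] {N : Subgroup G} (hN : N.Normal) :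
    ExtendByClass C Q (fun _ => N) ↔
      ∃ (M : Subgroup G) (hM : M.Normal), M ≤ N ∧ Q (fun _ => M) ∧ quotInClass C N M hM := by
  constructor
  · rintro ⟨M, hM, hQM⟩
    obtain ⟨hK, hCK⟩ := (NormalQuotInClass.finset_inf hiso hform Finset.univ_nonempty
      fun i _ => hM i).inf_self_left hN
    refine ⟨_, hK, inf_le_left, hQ M _ (fun i => (hM i).normal) (fun _ => hK)
      (fun i => inf_le_right.trans (Finset.inf_le (Finset.mem_univ i))) hQM, hCK⟩
  · rintro ⟨M, hM, -, hQM, hC⟩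
    exact ⟨fun _ => M, fun _ => ⟨hM, hC⟩, hQM⟩

end Extension

/-- **Extension lemma** (the case of a radical formation). Given a monotone multilinear
predicate `Q` on `l`-tuples of normal subgroups of `G` and a radical formation `𝓒`, there is
a monotone multilinear predicate `P` such that `P(N,…,N)` holds exactly when some normal
subgroup `M ≤ N` satisfies `Q(M,…,M)` and `N/M` lies in `𝓒`. -/
theorem stmt_6 {G : Type u} [Group G] {l : ℕ} (hl : 1 ≤ l)
    (Q : (Fin l → Subgroup G) → Prop) (hQmono : MonoOnNormal Q)
    (hQmulti : MultiOnNormal Q)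
    (C : GroupClass.{u}) (hiso : IsoClosed C) (hrad : IsRadicalClass C)
    (hform : IsFormation C) :
    ∃ P : (Fin l → Subgroup G) → Prop, MonoOnNormal P ∧ MultiOnNormal P ∧
      ∀ N : Subgroup G, N.Normal →
        (P (fun _ => N) ↔
          ∃ (M : Subgroup G) (hM : M.Normal), M ≤ N ∧ Q (fun _ => M) ∧
            quotInClass C N M hM) := by
  have : NeZero l := ⟨by omega⟩
  exact ⟨ExtendByClass C Q, monoOnNormal_extendByClass hiso hrad,
    multiOnNormal_extendByClass hiso hrad hform hQmono hQmulti,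
    fun _ hN => extendByClass_const_iff hiso hform hQmono hN⟩
end

section
/- Let G be a group, let t ≥ 1 be an integer, and let N be a normal subgroup of G of finite index. Then there exists a characteristic subgroup H of G of finite index such that log₂[G : H] ≤ f^{t−1}(log₂[G : N]) and such that, for every outer commutator word w of weight k with k ≤ t, if w(N,…,N) is the trivial subgroup then w(H,…,H) is the trivial subgroup. -/
/-- Full binary trees encoding outer commutator words. -/
inductive CTree : Type
  | leaf : CTree
  | node : CTree → CTree → CTree

/-- The weight (number of leaves) of an outer commutator word. -/
def CTree.weight : CTree → ℕ
  | .leaf => 1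
  | .node a b => a.weight + b.weight

/-- The verbal subgroup `w_T(N₁,…,N_t)` associated with an outer commutator word `T`. -/
def CTree.sub {G : Type*} [Group G] :
    (T : CTree) → (Fin T.weight → Subgroup G) → Subgroup G
  | .leaf, N => N ⟨0, Nat.one_pos⟩
  | .node a b, N =>
      ⁅a.sub (fun i => N (Fin.castAdd b.weight i)),
        b.sub (fun i => N (Fin.natAdd a.weight i))⁆

/-!
Let `X` be a normal subgroup of finite index and `X̂` the join of its images under all
automorphisms. Each new image joined at least halves the index, so `X̂` is the join of `s`
images `φ₁(X), …, φₛ(X)` with `2 ^ s ≤ 2 [G : X]`, and `X' = ⋂ φᵢ(X)` has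
`log₂ [G : X'] ≤ s log₂ [G : X] ≤ f (log₂ [G : X])`.

Call a value of `w` *`(X, Q, r)`-mixed* if at most `r` of its entries are `Q` and the others
are `X`. If `Q ⊇ X` is characteristic and all `(X, Q, r)`-mixed values vanish, then so do all
`(X', X̂, r + 1)`-mixed ones: writing one `X̂`-entry as the join of the `φᵢ(X)` and placing each
`X'`-entry inside `φᵢ(X)` and each remaining `X̂`-entry inside `Q = φᵢ(Q)`, every such value lies
in the join of the `φᵢ`-images of `(X, Q, r)`-mixed values. Starting from `X = N`, `Q = G` and
iterating `t - 1` times, the last `X̂` is the required `H`.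
-/

open Real

namespace Subgroup

variable {G : Type*} [Group G]

theorem commutator_iSup_le {ι : Sort*} {s : ι → Subgroup G} {B R : Subgroup G} [R.Normal]
    (h : ∀ i, ⁅s i, B⁆ ≤ R) : ⁅⨆ i, s i, B⁆ ≤ R := by
  -- modulo `R`, commuting with `B` means lying in the centralizer of its image
  have key : ∀ A : Subgroup G, ⁅A, B⁆ ≤ R ↔
      A.map (QuotientGroup.mk' R) ≤ centralizer (B.map (QuotientGroup.mk' R)) := fun A => by
    rw [← commutator_eq_bot_iff_le_centralizer, ← map_commutator, map_eq_bot_iff,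
      QuotientGroup.ker_mk']
  rw [key, map_iSup, iSup_le_iff]
  exact fun i => (key _).1 (h i)

theorem commutator_le_iSup_map_of_le_iSup_left {ι : Sort*} (f : ι → G ≃* G)
    {A B A₀ B₀ : Subgroup G} [A₀.Normal] [B₀.Normal]
    (hA : A ≤ ⨆ i, A₀.map (f i).toMonoidHom) (hB : ∀ i, B ≤ B₀.map (f i).toMonoidHom) :
    ⁅A, B⁆ ≤ ⨆ i, ⁅A₀, B₀⁆.map (f i).toMonoidHom := by
  have : ∀ i, (⁅A₀, B₀⁆.map (f i).toMonoidHom).Normal := fun i =>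
    Normal.map inferInstance _ (f i).surjective
  refine (commutator_mono hA le_rfl).trans (commutator_iSup_le fun i => ?_)
  refine (commutator_mono le_rfl (hB i)).trans ?_
  rw [← map_commutator]
  exact le_iSup_of_le i le_rfl

theorem commutator_le_iSup_map_of_le_iSup_right {ι : Sort*} (f : ι → G ≃* G)
    {A B A₀ B₀ : Subgroup G} [A₀.Normal] [B₀.Normal]
    (hA : ∀ i, A ≤ A₀.map (f i).toMonoidHom) (hB : B ≤ ⨆ i, B₀.map (f i).toMonoidHom) :
    ⁅A, B⁆ ≤ ⨆ i, ⁅A₀, B₀⁆.map (f i).toMonoidHom := by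
  rw [commutator_comm, commutator_comm A₀]
  exact commutator_le_iSup_map_of_le_iSup_left f hB hA

theorem two_mul_index_le_of_lt {K L : Subgroup G} [K.FiniteIndex] (h : K < L) :
    2 * L.index ≤ K.index := by
  have h0 : K.relIndex L ≠ 0 :=
    left_ne_zero_of_mul ((relIndex_mul_index h.le).trans_ne K.index_ne_zero_of_finite)
  rw [← relIndex_mul_index h.le]
  have h1 : K.relIndex L ≠ 1 := fun h1 => h.not_ge (relIndex_eq_one.mp h1)
  exact Nat.mul_le_mul_right _ (by omega)

theorem finiteIndex_map_mulEquiv (X : Subgroup G) [X.FiniteIndex] (φ : G ≃* G) :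
    (X.map φ.toMonoidHom).FiniteIndex :=
  ⟨(index_map_equiv X φ).trans_ne X.index_ne_zero_of_finite⟩

def autClosure (X : Subgroup G) : Subgroup G :=
  ⨆ φ : G ≃* G, X.map φ.toMonoidHom

theorem map_le_autClosure (X : Subgroup G) (φ : G ≃* G) : X.map φ.toMonoidHom ≤ autClosure X :=
  le_iSup (fun ψ : G ≃* G => X.map ψ.toMonoidHom) φ

theorem le_autClosure (X : Subgroup G) : X ≤ autClosure X :=
  (map_id X).ge.trans (map_le_autClosure X (MulEquiv.refl G))

instance autClosure_characteristic (X : Subgroup G) : (autClosure X).Characteristic := by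
  refine characteristic_iff_map_eq.mpr fun ψ => le_antisymm ?_ ?_
  · rw [autClosure, map_iSup]
    refine iSup_le fun φ => ?_
    rw [map_map]
    exact map_le_autClosure X (φ.trans ψ)
  · refine iSup_le fun φ => ?_
    have : X.map φ.toMonoidHom = (X.map (φ.trans ψ.symm).toMonoidHom).map ψ.toMonoidHom := by
      rw [map_map]
      congr 1
      ext
      simp
    rw [this]
    exact map_mono (map_le_autClosure X _)

theorem exists_finset_iSup_map_eq_autClosure (X : Subgroup G) [X.FiniteIndex] :
    ∃ F : Finset (G ≃* G), F.Nonempty ∧ 2 ^ F.card ≤ 2 * X.index ∧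
      ⨆ φ ∈ F, X.map φ.toMonoidHom = autClosure X := by
  classical
  suffices h : ∀ n (F : Finset (G ≃* G)), MulEquiv.refl G ∈ F →
      (⨆ φ ∈ F, X.map φ.toMonoidHom).index = n → 2 ^ F.card * n ≤ 2 * X.index →
      ∃ F : Finset (G ≃* G), F.Nonempty ∧ 2 ^ F.card ≤ 2 * X.index ∧
        ⨆ φ ∈ F, X.map φ.toMonoidHom = autClosure X from
    h _ {MulEquiv.refl G} (Finset.mem_singleton_self _) rfl (by simp)
  intro n
  induction n using Nat.strong_induction_on with
  | _ n ih =>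
  rintro F hF rfl hcard
  set J := ⨆ φ ∈ F, X.map φ.toMonoidHom
  have hXJ : X ≤ J := (map_id X).ge.trans (le_biSup (fun φ : G ≃* G => X.map φ.toMonoidHom) hF)
  have : J.FiniteIndex := finiteIndex_of_le hXJ
  by_cases hJ : J = autClosure X
  · exact ⟨F, ⟨_, hF⟩,
      le_of_mul_le_of_one_le_left hcard (Nat.pos_of_ne_zero J.index_ne_zero_of_finite), hJ⟩
  obtain ⟨ψ, hψ⟩ : ∃ ψ : G ≃* G, ¬X.map ψ.toMonoidHom ≤ J := by
    by_contra! h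
    exact hJ (le_antisymm (iSup₂_le fun φ _ => map_le_autClosure X φ) (iSup_le h))
  have hψF : ψ ∉ F := fun h => hψ (le_biSup (fun φ : G ≃* G => X.map φ.toMonoidHom) h)
  have hlt : J < ⨆ φ ∈ insert ψ F, X.map φ.toMonoidHom := by
    rw [Finset.iSup_insert]
    exact right_lt_sup.mpr hψ
  have hhalf := two_mul_index_le_of_lt hlt
  refine ih _ (by have := J.index_ne_zero_of_finite; omega) (insert ψ F)
    (Finset.mem_insert_of_mem hF) rfl ?_
  calc 2 ^ (insert ψ F).card * (⨆ φ ∈ insert ψ F, X.map φ.toMonoidHom).index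
      = 2 ^ F.card * (2 * (⨆ φ ∈ insert ψ F, X.map φ.toMonoidHom).index) := by
        rw [Finset.card_insert_of_notMem hψF, pow_succ]
        ring
    _ ≤ 2 ^ F.card * J.index := Nat.mul_le_mul_left _ hhalf
    _ ≤ 2 * X.index := hcard

end Subgroup

theorem logb_le_mul_logb_add_one {m n s : ℕ} (hm : m ≠ 0) (hs : 2 ^ s ≤ 2 * n)
    (hmn : m ≤ n ^ s) : logb 2 m ≤ logb 2 n * (logb 2 n + 1) := by
  have hn : (1 : ℝ) ≤ n := by
    have := Nat.one_le_two_pow (n := s)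
    exact_mod_cast (by omega : 1 ≤ n)
  have hs' : (s : ℝ) ≤ logb 2 n + 1 := by
    have := logb_le_logb_of_le one_lt_two (by positivity)
      (by exact_mod_cast hs : (2 : ℝ) ^ s ≤ 2 * n)
    rwa [logb_pow, logb_mul two_ne_zero (by positivity), logb_self_eq_one one_lt_two,
      mul_one, add_comm] at this
  calc logb 2 m ≤ logb 2 ((n : ℝ) ^ s) :=
        logb_le_logb_of_le one_lt_two (by exact_mod_cast Nat.pos_of_ne_zero hm)
          (by exact_mod_cast hmn)
    _ = s * logb 2 n := logb_pow _ _ _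
    _ ≤ (logb 2 n + 1) * logb 2 n := mul_le_mul_of_nonneg_right hs' (logb_nonneg one_lt_two hn)
    _ = logb 2 n * (logb 2 n + 1) := mul_comm _ _

namespace CTree

open Subgroup

variable {G : Type*} [Group G]

/-- `T.mixedSub X Q r` is the join of the values of `T` at the substitutions with at most `r`
entries `Q` and all other entries `X`. -/
def mixedSub (X Q : Subgroup G) : CTree → ℕ → Subgroup G
  | .leaf, 0 => X
  | .leaf, _ + 1 => Q
  | .node a b, r => ⨆ p : Fin (r + 1), ⁅a.mixedSub X Q p, b.mixedSub X Q (r - p)⁆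

variable {X Q X' Q' : Subgroup G}

theorem mixedSub_zero (T : CTree) : T.mixedSub X Q 0 = T.sub fun _ => X := by
  induction T with
  | leaf => rfl
  | node a b iha ihb =>
    change ⨆ p : Fin 1, _ = _
    rw [iSup_unique]
    exact congrArg₂ _ iha ihb

instance mixedSub_normal [X.Normal] [Q.Normal] (T : CTree) (r : ℕ) :
    (T.mixedSub X Q r).Normal := by
  induction T generalizing r with
  | leaf => cases r <;> assumption
  | node a b iha ihb => rw [mixedSub]; infer_instance

theorem commutator_le_mixedSub_node {a b : CTree} {p r : ℕ} (h : p ≤ r) :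
    ⁅a.mixedSub X Q p, b.mixedSub X Q (r - p)⁆ ≤ (node a b).mixedSub X Q r :=
  le_iSup_of_le (⟨p, Nat.lt_succ_of_le h⟩ : Fin (r + 1)) le_rfl

theorem mixedSub_mono (hX : X ≤ X') (hQ : Q ≤ Q') (T : CTree) (r : ℕ) :
    T.mixedSub X Q r ≤ T.mixedSub X' Q' r := by
  induction T generalizing r with
  | leaf => cases r; exacts [hX, hQ]
  | node a b iha ihb => exact iSup_mono fun p => commutator_mono (iha _) (ihb _)

theorem le_mixedSub_leaf (hXQ : X ≤ Q) (r : ℕ) : X ≤ leaf.mixedSub X Q r := by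
  cases r; exacts [le_rfl, hXQ]

theorem sub_le_mixedSub {T : CTree} {r : ℕ} (h : T.weight ≤ r) :
    (T.sub fun _ => Q) ≤ T.mixedSub X Q r := by
  induction T generalizing r with
  | leaf =>
    obtain ⟨r, rfl⟩ := Nat.exists_eq_add_of_le' h
    exact le_rfl
  | node a b iha ihb =>
    have ha : a.weight ≤ r := le_trans (Nat.le_add_right _ _) h
    exact (commutator_mono (iha le_rfl) (ihb (Nat.le_sub_of_add_le' h))).trans
      (commutator_le_mixedSub_node ha)

theorem map_mixedSub {G' : Type*} [Group G'] (f : G →* G') (T : CTree) (r : ℕ) :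
    (T.mixedSub X Q r).map f = T.mixedSub (X.map f) (Q.map f) r := by
  induction T generalizing r with
  | leaf => cases r <;> rfl
  | node a b iha ihb =>
    simp only [mixedSub, Subgroup.map_iSup, map_commutator, iha, ihb]

theorem mixedSub_succ_le_iSup_map {ι : Type*} (f : ι → G ≃* G) [X.Normal] [Q.Normal]
    (hXQ : X ≤ Q) (hQ : ∀ i, Q.map (f i).toMonoidHom = Q)
    (hX' : ∀ i, X' ≤ X.map (f i).toMonoidHom) (hQ' : Q' ≤ ⨆ i, X.map (f i).toMonoidHom)
    (T : CTree) (r : ℕ) :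
    T.mixedSub X' Q' (r + 1) ≤ ⨆ i, (T.mixedSub X Q r).map (f i).toMonoidHom := by
  have hQ'Q : Q' ≤ Q := hQ'.trans (iSup_le fun i => (hQ i).le.trans' (map_mono hXQ))
  have hmap : ∀ i (S : CTree) (k : ℕ),
      S.mixedSub X' Q' k ≤ (S.mixedSub X Q k).map (f i).toMonoidHom := fun i S k => by
    rw [map_mixedSub, hQ i]
    exact mixedSub_mono (hX' i) hQ'Q S k
  induction T generalizing r with
  | leaf => exact hQ'.trans (iSup_mono fun i => map_mono (le_mixedSub_leaf hXQ r))
  | node a b iha ihb =>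
    refine iSup_le fun ⟨p, hp⟩ => ?_
    -- expand the leftmost `Q'`-entry: it lies in `b` exactly when `p = 0`
    cases p with
    | zero =>
      refine (commutator_le_iSup_map_of_le_iSup_right f (hmap · a 0) (ihb r)).trans ?_
      exact iSup_mono fun i => map_mono (commutator_le_mixedSub_node (Nat.zero_le r))
    | succ p =>
      have hpr : p ≤ r := by omega
      rw [Nat.add_sub_add_right]
      refine (commutator_le_iSup_map_of_le_iSup_left f (iha p) (hmap · b (r - p))).trans ?_
      exact iSup_mono fun i => map_mono (commutator_le_mixedSub_node hpr)

theorem exists_le_autClosure_mixedSub_succ_eq_bot (X : Subgroup G) [X.Normal] [X.FiniteIndex] :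
    ∃ X' : Subgroup G, X'.Normal ∧ X'.FiniteIndex ∧ X' ≤ autClosure X ∧
      logb 2 X'.index ≤ logb 2 X.index * (logb 2 X.index + 1) ∧
      ∀ (Q : Subgroup G) [Q.Characteristic], X ≤ Q → ∀ (T : CTree) (r : ℕ),
        T.mixedSub X Q r = ⊥ → T.mixedSub X' (autClosure X) (r + 1) = ⊥ := by
  obtain ⟨F, ⟨φ₀, hφ₀⟩, hcard, hsup⟩ := exists_finset_iSup_map_eq_autClosure X
  rw [iSup_subtype'] at hsup
  have : ∀ φ : F, (X.map φ.1.toMonoidHom).FiniteIndex := fun φ => finiteIndex_map_mulEquiv X φ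
  have hindex : (⨅ φ : F, X.map φ.1.toMonoidHom).index ≤ X.index ^ F.card :=
    (index_iInf_le _).trans_eq <| by simp [Finset.prod_const, index_map_equiv]
  refine ⟨⨅ φ : F, X.map φ.1.toMonoidHom,
    normal_iInf_normal fun φ => Normal.map inferInstance _ φ.1.surjective,
    finiteIndex_iInf this, (iInf_le _ ⟨φ₀, hφ₀⟩).trans (hsup ▸ le_iSup_of_le ⟨φ₀, hφ₀⟩ le_rfl),
    logb_le_mul_logb_add_one (finiteIndex_iInf this).index_ne_zero hcard hindex, ?_⟩
  intro Q _ hXQ T r hT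
  have := mixedSub_succ_le_iSup_map (fun φ : F => φ.1) hXQ
    (fun φ => characteristic_iff_map_eq.mp ‹_› φ.1) (fun φ => iInf_le _ φ) hsup.ge T r
  simpa [hT] using this

theorem exists_mixedSub_eq_bot_of_sub_eq_bot (N : Subgroup G) [N.Normal] [N.FiniteIndex]
    (k : ℕ) :
    ∃ X Q : Subgroup G, X.Normal ∧ X.FiniteIndex ∧ Q.Characteristic ∧ X ≤ Q ∧
      logb 2 X.index ≤ (fun x : ℝ => x * (x + 1))^[k] (logb 2 N.index) ∧
      ∀ T : CTree, (T.sub fun _ => N) = ⊥ → T.mixedSub X Q k = ⊥ := by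
  induction k with
  | zero =>
    exact ⟨N, ⊤, inferInstance, inferInstance, inferInstance, le_top, le_rfl,
      fun T hT => (mixedSub_zero T).trans hT⟩
  | succ k ih =>
    obtain ⟨X, Q, _, _, _, hXQ, hlog, hbot⟩ := ih
    obtain ⟨X', hX', hX'f, hX'le, hlog', hstep⟩ := exists_le_autClosure_mixedSub_succ_eq_bot X
    refine ⟨X', autClosure X, hX', hX'f, inferInstance, hX'le, ?_,
      fun T hT => hstep Q hXQ T k (hbot T hT)⟩
    have h0 : 0 ≤ logb 2 X.index :=
      logb_nonneg one_lt_two (by exact_mod_cast Nat.pos_of_ne_zero X.index_ne_zero_of_finite)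
    rw [Function.iterate_succ_apply']
    exact hlog'.trans (by nlinarith)

end CTree

/-- **Khukhro–Makarenko theorem with estimate.** For every normal subgroup `N` of finite
index in `G` and every `t ≥ 1` there is a characteristic subgroup `H` of finite index with
`log₂[G:H] ≤ f^{t-1}(log₂[G:N])` (where `f(x) = x(x+1)`) such that `H` satisfies every
outer commutator identity of weight at most `t` that `N` satisfies. -/
theorem stmt_9 {G : Type*} [Group G] {t : ℕ} (ht : 1 ≤ t)
    (N : Subgroup G) (hN : N.Normal) (hNfin : N.FiniteIndex) :
    ∃ H : Subgroup G, H.Characteristic ∧ H.FiniteIndex ∧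
      Real.logb 2 (H.index : ℝ) ≤
        (fun x : ℝ => x * (x + 1))^[t - 1] (Real.logb 2 (N.index : ℝ)) ∧
      ∀ T : CTree, T.weight ≤ t →
        T.sub (fun _ => N) = ⊥ → T.sub (fun _ => H) = ⊥ := by
  obtain ⟨X, Q, _, _, _, hXQ, hlog, hbot⟩ := CTree.exists_mixedSub_eq_bot_of_sub_eq_bot N (t - 1)
  obtain ⟨X', -, -, hX'le, -, hstep⟩ := CTree.exists_le_autClosure_mixedSub_succ_eq_bot X
  have hXH := Subgroup.le_autClosure X
  refine ⟨Subgroup.autClosure X, inferInstance, Subgroup.finiteIndex_of_le hXH, ?_, ?_⟩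
  · refine le_trans (logb_le_logb_of_le one_lt_two ?_ ?_) hlog
    · exact_mod_cast Nat.pos_of_ne_zero (Subgroup.finiteIndex_of_le hXH).index_ne_zero
    · exact_mod_cast Subgroup.index_antitone hXH
  · intro T hT hTN
    have := hstep Q hXQ T (t - 1) (hbot T hTN)
    rw [Nat.sub_add_cancel ht] at this
    exact le_bot_iff.mp (this ▸ CTree.sub_le_mixedSub hT)
end

section
/- Let G be a group of bounded exponent (there exists an integer e ≥ 1 with gᵉ = 1 for all g ∈ G) and let N be a finite normal subgroup of G. Then G has a characteristic finite subgroup H such that the spectrum of G/H is contained in the spectrum of G/N, i.e., for every element x of the quotient group G/H there exists an element y of the quotient group G/N with the same order as x. -/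
/-- `SpectrumLE H N hH hN` says that every element of `G/H` has the same order as some
element of `G/N` (the spectrum of `G/H` is contained in the spectrum of `G/N`). -/
def SpectrumLE {G : Type*} [Group G] (H N : Subgroup G)
    (hH : H.Normal) (hN : N.Normal) : Prop :=
  haveI := hH
  haveI := hN
  ∀ x : G ⧸ H, ∃ y : G ⧸ N, orderOf y = orderOf x

/-!
Let `S` be the spectrum of `G/N`; it is finite because `G` has bounded exponent, and closed under
divisors. Say that a subgroup `M` absorbs `S`-powers if every `g` has a power `g ^ k ∈ M` with
`k ∈ S`; then every order in `G/M` divides an element of `S`, hence lies in `S`. `N` is a finite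
normal subgroup absorbing `S`-powers. Among all such subgroups, those of minimal order are finitely
many: otherwise a Δ-system argument yields `|S| + 2` of them meeting pairwise in one subgroup `D`,
and by pigeonhole two of them absorb a given `g` with the same exponent, so `D` would be a smaller
one. Automorphisms permute the minimal ones, so their join is the required characteristic
subgroup.
-/

namespace Subgroup

variable {G : Type*} [Group G]

lemma card_lt_card_of_lt {A B : Subgroup G} [Finite B] (h : A < B) :
    Nat.card A < Nat.card B := by
  rw [← SetLike.coe_sort_coe, ← SetLike.coe_sort_coe, Nat.card_coe_set_eq, Nat.card_coe_set_eq]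
  exact Set.ncard_lt_ncard (SetLike.coe_ssubset_coe.mpr h) (Set.toFinite _)

lemma finite_Iic (M : Subgroup G) [Finite M] : (Set.Iic M).Finite :=
  Set.finite_coe_iff.mp (Finite.of_equiv _ (MapSubtype.orderIso M).toEquiv)

lemma finite_sup_of_normal (A B : Subgroup G) [B.Normal] [Finite A] [Finite B] :
    Finite ↥(A ⊔ B) := by
  rw [← SetLike.coe_sort_coe, mul_normal, Set.finite_coe_iff]
  exact (Set.toFinite (A : Set G)).mul (Set.toFinite (B : Set G))

lemma finite_sSup_of_normal {ℳ : Set (Subgroup G)} (hℳ : ℳ.Finite)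
    (h : ∀ M ∈ ℳ, M.Normal ∧ Finite M) : Finite ↥(sSup ℳ) := by
  induction ℳ, hℳ using Set.Finite.induction_on with
  | empty => rw [sSup_empty]; infer_instance
  | @insert A ℳ _ _ ih =>
    rw [sSup_insert]
    have hA : Finite A := (h A (Set.mem_insert A ℳ)).2
    have hℳn := sSup_normal ℳ fun M hM => (h M (Set.mem_insert_of_mem A hM)).1
    have hℳf := ih fun M hM => h M (Set.mem_insert_of_mem A hM)
    exact finite_sup_of_normal A (sSup ℳ)

theorem exists_finset_pairwise_inf_eq {ℳ : Set (Subgroup G)} (hℳ : ℳ.Infinite) {m : ℕ}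
    (hm : ∀ M ∈ ℳ, Finite M ∧ Nat.card M ≤ m) (r : ℕ) :
    ∃ D : Subgroup G, ∃ s : Finset (Subgroup G), s.card = r ∧ ↑s ⊆ ℳ ∧
      (s : Set (Subgroup G)).Pairwise (fun A B => A ⊓ B = D) := by
  set 𝒟 := {D : Subgroup G | {M ∈ ℳ | D ≤ M}.Infinite}
  have hbot : ⊥ ∈ 𝒟 := by simpa [𝒟] using hℳ
  have hcard : (fun D : Subgroup G => Nat.card D) '' 𝒟 ⊆ Set.Iic m := by
    rintro _ ⟨D, hD, rfl⟩
    obtain ⟨M, hMℳ, hDM⟩ := hD.nonempty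
    have := (hm M hMℳ).1
    exact (card_le_of_le hDM).trans (hm M hMℳ).2
  obtain ⟨_, ⟨D, hD, rfl⟩, hDmax⟩ := Set.exists_max_image _ id
    ((Set.finite_Iic m).subset hcard) ⟨_, Set.mem_image_of_mem _ hbot⟩
  -- `D` is a largest subgroup below infinitely many members of `ℳ`, so every subgroup strictly
  -- above `D` lies below only finitely many of them.
  have hfew : ∀ A ∈ ℳ, D ≤ A → {M ∈ ℳ | D ≤ M ∧ M ⊓ A ≠ D}.Finite := by
    intro A hA hDA
    have := (hm A hA).1
    have hcover : {M ∈ ℳ | D ≤ M ∧ M ⊓ A ≠ D} ⊆ ⋃ E ∈ {E | E ≤ A ∧ D < E}, {M ∈ ℳ | E ≤ M} := by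
      rintro M ⟨hMℳ, hDM, hne⟩
      exact Set.mem_biUnion ⟨inf_le_right, (le_inf hDM hDA).lt_of_ne' hne⟩ ⟨hMℳ, inf_le_left⟩
    refine ((A.finite_Iic.subset fun E hE => hE.1).biUnion fun E hE => ?_).subset hcover
    by_contra hinf
    have : Finite E := Finite.of_injective _ (inclusion_injective hE.1)
    exact (hDmax _ (Set.mem_image_of_mem _ hinf)).not_gt (card_lt_card_of_lt hE.2)
  have hbuild : ∀ r : ℕ, ∃ s : Finset (Subgroup G), s.card = r ∧ ↑s ⊆ {M ∈ ℳ | D ≤ M} ∧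
      (s : Set (Subgroup G)).Pairwise (fun A B => A ⊓ B = D) := by
    classical
    intro n
    induction n with
    | zero => exact ⟨∅, rfl, by simp, by simp⟩
    | succ n ih =>
      obtain ⟨s, hs, hsub, hpw⟩ := ih
      have hexcl : (↑s ∪ ⋃ A ∈ s, {M ∈ ℳ | D ≤ M ∧ M ⊓ A ≠ D}).Finite :=
        s.finite_toSet.union (s.finite_toSet.biUnion fun A hA => hfew A (hsub hA).1 (hsub hA).2)
      obtain ⟨M, hM, hMs⟩ := ((show {M ∈ ℳ | D ≤ M}.Infinite from hD).sdiff hexcl).nonempty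
      simp only [Set.mem_union, Finset.mem_coe, Set.mem_iUnion, not_or, not_exists] at hMs
      refine ⟨insert M s, by rw [Finset.card_insert_of_notMem hMs.1, hs], ?_, ?_⟩
      · rw [Finset.coe_insert]; exact Set.insert_subset hM hsub
      · rw [Finset.coe_insert, Set.pairwise_insert]
        refine ⟨hpw, fun A hA _ => ?_⟩
        have hMA : M ⊓ A = D := by_contra fun hne => hMs.2 A hA ⟨hM.1, hM.2, hne⟩
        exact ⟨hMA, inf_comm A M ▸ hMA⟩
  obtain ⟨s, hs, hsub, hpw⟩ := hbuild r
  exact ⟨D, s, hs, fun M hM => (hsub hM).1, hpw⟩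

def AbsorbsPowers (S : Set ℕ) (M : Subgroup G) : Prop :=
  ∀ g : G, ∃ k ∈ S, g ^ k ∈ M

namespace AbsorbsPowers

variable {S : Set ℕ} {M : Subgroup G}

lemma mono (h : AbsorbsPowers S M) {M' : Subgroup G} (hle : M ≤ M') : AbsorbsPowers S M' :=
  fun g => (h g).imp fun _ hk => ⟨hk.1, hle hk.2⟩

lemma map_mulEquiv (h : AbsorbsPowers S M) (φ : G ≃* G) :
    AbsorbsPowers S (M.map φ.toMonoidHom) := by
  intro g
  obtain ⟨k, hk, hmem⟩ := h (φ.symm g)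
  exact ⟨k, hk, _, hmem, by simp⟩

lemma of_pairwise_inf_eq (hS : S.Finite) {s : Finset (Subgroup G)} (hs : S.ncard < s.card)
    (habs : ∀ M ∈ s, AbsorbsPowers S M) {D : Subgroup G}
    (hD : (s : Set (Subgroup G)).Pairwise (fun A B => A ⊓ B = D)) : AbsorbsPowers S D := by
  intro g
  have hpow : ∀ M, ∃ k, M ∈ s → k ∈ S ∧ g ^ k ∈ M := fun M => by
    by_cases hM : M ∈ s
    · obtain ⟨k, hk⟩ := habs M hM g
      exact ⟨k, fun _ => hk⟩
    · exact ⟨0, fun h => absurd h hM⟩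
  choose k hk using hpow
  obtain ⟨A, hA, B, hB, hAB, hkAB⟩ := Finset.exists_ne_map_eq_of_card_lt_of_maps_to
    (t := hS.toFinset) (by rwa [← Set.ncard_eq_toFinset_card S hS])
    (fun M hM => hS.mem_toFinset.mpr (hk M hM).1)
  exact ⟨k A, (hk A hA).1, hD hA hB hAB ▸ ⟨(hk A hA).2, hkAB ▸ (hk B hB).2⟩⟩

end AbsorbsPowers

lemma finite_setOf_absorbsPowers_card_eq {S : Set ℕ} (hS : S.Finite) {m : ℕ}
    (hm : ∀ M : Subgroup G, M.Normal → Finite M → AbsorbsPowers S M → m ≤ Nat.card M) :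
    {M : Subgroup G | M.Normal ∧ Finite M ∧ AbsorbsPowers S M ∧ Nat.card M = m}.Finite := by
  by_contra hinf
  obtain ⟨D, s, hs, hsub, hpw⟩ := exists_finset_pairwise_inf_eq hinf
    (fun M hM => ⟨hM.2.1, hM.2.2.2.le⟩) (S.ncard + 2)
  obtain ⟨A, hA, B, hB, hAB⟩ := Finset.one_lt_card.mp (by omega : 1 < s.card)
  obtain ⟨hAn, hAf, -, hAm⟩ := hsub hA
  obtain ⟨hBn, hBf, -, hBm⟩ := hsub hB
  have hD : A ⊓ B = D := hpw hA hB hAB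
  have hDlt : D < A := by
    refine hD ▸ inf_le_left.lt_of_ne fun h => hAB ?_
    exact eq_of_le_of_card_ge (inf_eq_left.mp h) (hBm.trans hAm.symm).le
  have hDabs : AbsorbsPowers S D :=
    .of_pairwise_inf_eq hS (by omega) (fun M hM => (hsub hM).2.2.1) hpw
  have hDm := hm D (hD ▸ inferInstance) (Finite.of_injective _ (inclusion_injective hDlt.le)) hDabs
  exact (card_lt_card_of_lt hDlt).not_ge (hAm ▸ hDm)

theorem exists_characteristic_finite_absorbsPowers {S : Set ℕ} (hS : S.Finite) {N : Subgroup G}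
    (hN : N.Normal) (hNfin : Finite N) (hNS : AbsorbsPowers S N) :
    ∃ H : Subgroup G, H.Characteristic ∧ Finite H ∧ AbsorbsPowers S H := by
  classical
  have hex : ∃ n, ∃ M : Subgroup G, (M.Normal ∧ Finite M ∧ AbsorbsPowers S M) ∧ Nat.card M = n :=
    ⟨_, N, ⟨hN, hNfin, hNS⟩, rfl⟩
  obtain ⟨M₀, ⟨_, _, hM₀S⟩, hM₀m⟩ := Nat.find_spec hex
  set ℳ := {M : Subgroup G | M.Normal ∧ Finite M ∧ AbsorbsPowers S M ∧ Nat.card M = Nat.find hex}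
  have hℳ : ℳ.Finite := finite_setOf_absorbsPowers_card_eq hS
    fun M hMn hMf hMS => Nat.find_min' hex ⟨M, ⟨hMn, hMf, hMS⟩, rfl⟩
  have hM₀ : M₀ ∈ ℳ := ⟨‹_›, ‹_›, hM₀S, hM₀m⟩
  refine ⟨sSup ℳ, ?_, finite_sSup_of_normal hℳ fun M hM => ⟨hM.1, hM.2.1⟩,
    hM₀S.mono (le_sSup hM₀)⟩
  refine characteristic_iff_map_le.mpr fun φ => map_le_iff_le_comap.mpr <| sSup_le fun M hM => ?_
  obtain ⟨hMn, hMf, hMS, hMm⟩ := hM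
  refine map_le_iff_le_comap.mp <| le_sSup ⟨hMn.map _ φ.surjective, ?_, hMS.map_mulEquiv φ,
    (card_map_of_injective φ.injective).trans hMm⟩
  exact Finite.of_equiv _ (M.equivMapOfInjective _ φ.injective).toEquiv

end Subgroup

lemma exists_orderOf_eq_of_dvd_orderOf {G : Type*} [Group G] {x : G} (hx : IsOfFinOrder x)
    {d : ℕ} (hd : d ∣ orderOf x) : ∃ y : G, orderOf y = d :=
  ⟨x ^ (orderOf x / d), orderOf_pow_orderOf_div hx.orderOf_pos.ne' hd⟩

/-- **Spectrum theorem.** For any finite normal subgroup `N` of a group `G` of bounded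
exponent, there is a characteristic finite subgroup `H` of `G` such that the spectrum of
`G/H` is contained in the spectrum of `G/N`. -/
theorem stmt_11 {G : Type*} [Group G] (e : ℕ) (he : 1 ≤ e)
    (hexp : ∀ g : G, g ^ e = 1)
    (N : Subgroup G) (hN : N.Normal) (hNfin : Finite ↥N) :
    ∃ (H : Subgroup G) (hH : H.Normal), H.Characteristic ∧ Finite ↥H ∧
      SpectrumLE H N hH hN := by
  have hexpN : ∀ y : G ⧸ N, y ^ e = 1 := fun y => by
    induction y using QuotientGroup.induction_on with
    | H g => rw [← QuotientGroup.mk_pow, hexp g, QuotientGroup.mk_one]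
  set S := Set.range (orderOf : G ⧸ N → ℕ)
  have hS : S.Finite := (Set.finite_Iic e).subset <| Set.range_subset_iff.mpr fun y =>
    orderOf_le_of_pow_eq_one he (hexpN y)
  have hNS : Subgroup.AbsorbsPowers S N := fun g =>
    ⟨_, ⟨g, rfl⟩, (QuotientGroup.eq_one_iff _).mp (by rw [QuotientGroup.mk_pow, pow_orderOf_eq_one])⟩
  obtain ⟨H, hHchar, hHfin, hHS⟩ :=
    Subgroup.exists_characteristic_finite_absorbsPowers hS hN hNfin hNS
  refine ⟨H, inferInstance, hHchar, hHfin, fun x => ?_⟩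
  induction x using QuotientGroup.induction_on with
  | H g =>
    obtain ⟨_, ⟨y, rfl⟩, hgy⟩ := hHS g
    have hdvd : orderOf (g : G ⧸ H) ∣ orderOf y := orderOf_dvd_of_pow_eq_one <| by
      rwa [← QuotientGroup.mk_pow, QuotientGroup.eq_one_iff]
    exact exists_orderOf_eq_of_dvd_orderOf (isOfFinOrder_iff_pow_eq_one.mpr ⟨e, he, hexpN y⟩) hdvd
end

section
/- Let G be a group of bounded exponent (there exists an integer e ≥ 1 with gᵉ = 1 for all g ∈ G) and let N be a finite normal subgroup of G. Then G has a characteristic finite subgroup H such that for every element x of the commutator subgroup of the quotient group G/H there exists an element y of the commutator subgroup of the quotient group G/N with the same order as x. -/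
/-!
Let `C` be the subgroup generated by the `Aut G`-orbits of those elements of `N` whose orbit is
finite. These orbits form a finite set, each element of which lies in a finite normal subgroup
`φ(N)`, so `C` is a finite characteristic subgroup; and every element of `NC` outside `C` has an
infinite orbit. If the image of `x` in `G/C` has finite order `t`, P. M. Neumann's lemma (a
consequence of B. H. Neumann's theorem on coverings of a group by finitely many cosets) gives an
automorphism `φ` moving the finitely many elements `x ^ (t / p)`, `p ∣ t` prime, off the finite
set `NC \ C`, so that `φ x` has order exactly `t` modulo `NC`. Finally `G/N → G/NC` has finite
kernel, so an element of order `t` in the commutator subgroup of `G/NC` lifts to one of the same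
order in the commutator subgroup of `G/N`.
-/

/-- `CommSpectrumLE H N hH hN` says that every element of the commutator subgroup of `G/H`
has the same order as some element of the commutator subgroup of `G/N`. -/
def CommSpectrumLE {G : Type*} [Group G] (H N : Subgroup G)
    (hH : H.Normal) (hN : N.Normal) : Prop :=
  haveI := hH
  haveI := hN
  ∀ x : G ⧸ H, x ∈ commutator (G ⧸ H) →
    ∃ y : G ⧸ N, y ∈ commutator (G ⧸ N) ∧ orderOf y = orderOf x

open MulAction Pointwise

theorem MulAction.exists_smul_notMem_of_orbit_infinite {Γ α : Type*} [Group Γ] [MulAction Γ α]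
    {s Δ : Set α} (hs : s.Finite) (hΔ : Δ.Finite) (hΔinf : ∀ d ∈ Δ, (orbit Γ d).Infinite) :
    ∃ γ : Γ, ∀ v ∈ s, γ • v ∉ Δ := by
  classical
  by_contra! hcover
  let I := (hs.toFinset ×ˢ hΔ.toFinset).filter fun p => p.2 ∈ orbit Γ p.1
  choose g hg using fun p : I => mem_orbit_iff.mp (Finset.mem_filter.mp p.2).2
  -- `γ • v = d` holds exactly on the coset `g (v, d) • stabilizer Γ v`.
  have hunion : ⋃ p ∈ (Finset.univ : Finset I), g p • (stabilizer Γ p.1.1 : Set Γ) =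
      Set.univ := by
    refine Set.eq_univ_of_forall fun γ => ?_
    obtain ⟨v, hv, hγv⟩ := hcover γ
    have hp : (v, γ • v) ∈ I := by simp [I, hv, hγv, mem_orbit]
    refine Set.mem_biUnion (Finset.mem_univ ⟨_, hp⟩) ?_
    rw [mem_leftCoset_iff, SetLike.mem_coe, mem_stabilizer_iff, mul_smul, inv_smul_eq_iff, hg]
  obtain ⟨⟨⟨v, d⟩, hp⟩, -, hfin⟩ := Subgroup.exists_finiteIndex_of_leftCoset_cover hunion
  obtain ⟨hvd, hdv⟩ := Finset.mem_filter.mp hp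
  have hd : d ∈ Δ := hΔ.mem_toFinset.mp (Finset.mem_product.mp hvd).2
  have hv : (orbit Γ v).Finite :=
    Set.finite_of_ncard_ne_zero (index_stabilizer Γ v ▸ hfin.index_ne_zero)
  exact hΔinf d hd (orbit_eq_iff.mpr hdv ▸ hv)

section FiniteOrbits

variable (Γ G : Type*) [Group Γ] [Group G] [MulDistribMulAction Γ G]

def finiteOrbitSubgroup : Subgroup G where
  carrier := {g | (orbit Γ g).Finite}
  one_mem' := (Set.finite_singleton 1).subset <| by rintro _ ⟨γ, rfl⟩; exact smul_one γ
  mul_mem' {a b} ha hb := (ha.image2 (· * ·) hb).subset <| by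
    rintro _ ⟨γ, rfl⟩
    exact ⟨γ • a, mem_orbit a γ, γ • b, mem_orbit b γ, (smul_mul' γ a b).symm⟩
  inv_mem' {a} ha := (ha.image (·⁻¹)).subset <| by
    rintro _ ⟨γ, rfl⟩
    exact ⟨γ • a, mem_orbit a γ, (smul_inv' γ a).symm⟩

variable {Γ G}

theorem orbit_subset_finiteOrbitSubgroup {g : G} (hg : g ∈ finiteOrbitSubgroup Γ G) :
    orbit Γ g ⊆ finiteOrbitSubgroup Γ G := by
  rintro _ ⟨γ, rfl⟩
  show (orbit Γ (γ • g)).Finite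
  rwa [orbit_smul]

end FiniteOrbits

section Finiteness

variable {G : Type*} [Group G]

theorem Subgroup.finite_sup_of_normal_s12 (H K : Subgroup G) [K.Normal] [Finite H] [Finite K] :
    Finite ↥(H ⊔ K) :=
  (mul_normal H K ▸ (H : Set G).toFinite.mul (K : Set G).toFinite).to_subtype

theorem Subgroup.exists_finite_normal_superset {T : Set G} (hT : T.Finite)
    (hmem : ∀ t ∈ T, ∃ K : Subgroup G, K.Normal ∧ Finite K ∧ t ∈ K) :
    ∃ P : Subgroup G, P.Normal ∧ Finite P ∧ T ⊆ P := by
  induction T, hT using Set.Finite.induction_on with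
  | empty => exact ⟨⊥, inferInstance, inferInstance, Set.empty_subset _⟩
  | @insert t T _ _ ih =>
    obtain ⟨K, hK, hKfin, htK⟩ := hmem t (Set.mem_insert t T)
    obtain ⟨P, hP, hPfin, hTP⟩ := ih fun u hu => hmem u (Set.mem_insert_of_mem t hu)
    exact ⟨P ⊔ K, sup_normal P K, finite_sup_of_normal_s12 P K,
      Set.insert_subset (mem_sup_right htK) (hTP.trans (SetLike.coe_subset_coe.mpr le_sup_left))⟩

theorem Subgroup.isOfFinOrder_of_mem {M : Subgroup G} [Finite M] {g : G} (hg : g ∈ M) :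
    IsOfFinOrder g :=
  Submonoid.isOfFinOrder_coe.mpr (isOfFinOrder_of_finite (⟨g, hg⟩ : M))

theorem QuotientGroup.isOfFinOrder_of_map_eq_one {N M : Subgroup G} [N.Normal] [M.Normal]
    [Finite M] (hNM : N ≤ M) {a : G ⧸ N} (ha : map N M (MonoidHom.id G) hNM a = 1) :
    IsOfFinOrder a := by
  obtain ⟨g, rfl⟩ := mk_surjective a
  exact (mk' N).isOfFinOrder (Subgroup.isOfFinOrder_of_mem ((eq_one_iff g).mp ha))

end Finiteness

section Orders

variable {A B : Type*} [Group A] [Group B] {f : A →* B}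

theorem isOfFinOrder_of_isOfFinOrder_map (hf : ∀ a, f a = 1 → IsOfFinOrder a) {a : A}
    (ha : IsOfFinOrder (f a)) : IsOfFinOrder a :=
  (hf _ (by rw [map_pow, pow_orderOf_eq_one])).of_pow (orderOf_pos_iff.mpr ha).ne'

theorem Subgroup.exists_mem_orderOf_eq_orderOf_map (hf : ∀ a, f a = 1 → IsOfFinOrder a)
    {S : Subgroup A} {a : A} (ha : a ∈ S) : ∃ y ∈ S, orderOf y = orderOf (f a) := by
  by_cases h : orderOf a = 0
  · refine ⟨a, ha, ?_⟩
    rw [h, eq_comm, orderOf_eq_zero_iff]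
    exact fun hfa => orderOf_eq_zero_iff.mp h (isOfFinOrder_of_isOfFinOrder_map hf hfa)
  · exact ⟨a ^ (orderOf a / orderOf (f a)), S.pow_mem ha _,
      orderOf_pow_orderOf_div h (orderOf_map_dvd f a)⟩

end Orders

theorem Subgroup.Characteristic.apply_mem_iff {G : Type*} [Group G] {H : Subgroup G}
    [hH : H.Characteristic] (φ : G ≃* G) {g : G} : φ g ∈ H ↔ g ∈ H := by
  conv_rhs => rw [← hH.fixed φ]
  rfl

theorem map_commutator_of_surjective {G H : Type*} [Group G] [Group H] {f : G →* H}
    (hf : Function.Surjective f) : (commutator G).map f = commutator H := by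
  rw [map_commutator_eq, MonoidHom.range_eq_top.mpr hf, commutator_def]

section FiniteOrbitClosure

variable {G : Type*} [Group G]

def finiteOrbitClosure (N : Subgroup G) : Subgroup G :=
  Subgroup.closure (⋃ n ∈ N ⊓ finiteOrbitSubgroup (MulAut G) G, orbit (MulAut G) n)

variable (N : Subgroup G)

instance finiteOrbitClosure_characteristic : (finiteOrbitClosure N).Characteristic := by
  refine Subgroup.characteristic_iff_map_le.mpr fun φ => ?_
  rw [finiteOrbitClosure, MonoidHom.map_closure]
  refine Subgroup.closure_mono ?_
  rintro _ ⟨g, hg, rfl⟩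
  obtain ⟨n, hn, ψ, rfl⟩ := Set.mem_iUnion₂.mp hg
  exact Set.mem_iUnion₂.mpr ⟨n, hn, φ * ψ, rfl⟩

theorem finiteOrbitClosure_le_finiteOrbitSubgroup :
    finiteOrbitClosure N ≤ finiteOrbitSubgroup (MulAut G) G :=
  (Subgroup.closure_le _).mpr <| Set.iUnion₂_subset fun _ hn =>
    orbit_subset_finiteOrbitSubgroup (Subgroup.mem_inf.mp hn).2

theorem finite_finiteOrbitClosure [N.Normal] [Finite N] : Finite (finiteOrbitClosure N) := by
  have hT : (⋃ n ∈ N ⊓ finiteOrbitSubgroup (MulAut G) G, orbit (MulAut G) n).Finite :=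
    ((N : Set G).toFinite.subset inf_le_left).biUnion fun _ hn => (Subgroup.mem_inf.mp hn).2
  obtain ⟨P, -, hPfin, hTP⟩ := Subgroup.exists_finite_normal_superset hT <| by
    intro _ ht
    obtain ⟨n, hn, φ, rfl⟩ := Set.mem_iUnion₂.mp ht
    exact ⟨N.map φ.toMonoidHom, ‹N.Normal›.map _ φ.surjective,
      .of_equiv _ (N.equivMapOfInjective _ φ.injective).toEquiv,
      Subgroup.mem_map_of_mem _ (Subgroup.mem_inf.mp hn).1⟩
  exact Finite.of_injective _ (Subgroup.inclusion_injective ((Subgroup.closure_le P).mpr hTP))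

theorem orbit_infinite_of_mem_sup_finiteOrbitClosure {g : G}
    (hg : g ∈ N ⊔ finiteOrbitClosure N) (hgC : g ∉ finiteOrbitClosure N) :
    (orbit (MulAut G) g).Infinite := by
  obtain ⟨n, hn, c, hc, rfl⟩ := Subgroup.mem_sup_of_normal_right.mp hg
  intro hfin
  have hcF := finiteOrbitClosure_le_finiteOrbitSubgroup N hc
  have hnF : n ∈ finiteOrbitSubgroup (MulAut G) G := by
    simpa using Subgroup.mul_mem _ (show n * c ∈ finiteOrbitSubgroup (MulAut G) G from hfin)
      (Subgroup.inv_mem _ hcF)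
  exact hgC <| Subgroup.mul_mem _ (Subgroup.subset_closure <|
    Set.mem_iUnion₂.mpr ⟨n, Subgroup.mem_inf.mpr ⟨hn, hnF⟩, mem_orbit_self n⟩) hc

end FiniteOrbitClosure

theorem exists_orderOf_mk_apply_eq {G : Type*} [Group G] {C M : Subgroup G} [C.Characteristic]
    [M.Normal] [Finite M] (hCM : C ≤ M)
    (hinf : ∀ g ∈ M, g ∉ C → (orbit (MulAut G) g).Infinite) (x : G) :
    ∃ φ : MulAut G, orderOf (φ x : G ⧸ M) = orderOf (x : G ⧸ C) := by
  set t := orderOf (x : G ⧸ C)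
  rcases eq_or_ne t 0 with ht | ht
  · refine ⟨1, ?_⟩
    rw [ht, orderOf_eq_zero_iff]
    intro hx
    have hker (g : G) (hg : QuotientGroup.mk' M g = 1) : IsOfFinOrder g :=
      Subgroup.isOfFinOrder_of_mem ((QuotientGroup.eq_one_iff g).mp hg)
    exact orderOf_eq_zero_iff.mp ht <|
      (QuotientGroup.mk' C).isOfFinOrder (isOfFinOrder_of_isOfFinOrder_map hker hx)
  have hxC : ∀ p ∈ t.primeFactors, x ^ (t / p) ∉ C := by
    intro p hp hmem
    have hp' := Nat.prime_of_mem_primeFactors hp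
    refine pow_ne_one_of_lt_orderOf
      (Nat.div_pos (Nat.le_of_mem_primeFactors hp) hp'.pos).ne'
      (Nat.div_lt_self (Nat.pos_of_ne_zero ht) hp'.one_lt) ?_
    rw [← QuotientGroup.mk_pow, QuotientGroup.eq_one_iff]
    exact hmem
  obtain ⟨φ, hφ⟩ := exists_smul_notMem_of_orbit_infinite
    ((t.primeFactors.finite_toSet).image fun p => x ^ (t / p))
    ((M : Set G).toFinite.sdiff (t := C)) fun d hd => hinf d hd.1 hd.2
  refine ⟨φ, orderOf_eq_of_pow_and_pow_div_prime (Nat.pos_of_ne_zero ht) ?_ fun p hp hpt => ?_⟩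
  · rw [← QuotientGroup.mk_pow, ← map_pow, QuotientGroup.eq_one_iff]
    refine hCM ((Subgroup.Characteristic.apply_mem_iff φ).mpr ?_)
    rw [← QuotientGroup.eq_one_iff, QuotientGroup.mk_pow]
    exact pow_orderOf_eq_one _
  · have hp' : p ∈ t.primeFactors := Nat.mem_primeFactors.mpr ⟨hp, hpt, ht⟩
    rw [← QuotientGroup.mk_pow, ← map_pow, Ne, QuotientGroup.eq_one_iff]
    exact fun hM => hφ _ (Set.mem_image_of_mem _ hp')
      ⟨hM, fun hC => hxC p hp' ((Subgroup.Characteristic.apply_mem_iff φ).mp hC)⟩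

theorem stmt_12_general {G : Type*} [Group G]
    (N : Subgroup G) (hN : N.Normal) (hNfin : Finite ↥N) :
    ∃ (H : Subgroup G) (hH : H.Normal), H.Characteristic ∧ Finite ↥H ∧
      CommSpectrumLE H N hH hN := by
  set C := finiteOrbitClosure N
  have hCfin : Finite C := finite_finiteOrbitClosure N
  have : Finite ↥(N ⊔ C) := Subgroup.finite_sup_of_normal_s12 N C
  refine ⟨C, inferInstance, inferInstance, hCfin, fun x hx => ?_⟩
  rw [← map_commutator_of_surjective (QuotientGroup.mk'_surjective C)] at hx
  obtain ⟨x, hxG, rfl⟩ := hx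
  obtain ⟨φ, hφ⟩ := exists_orderOf_mk_apply_eq (le_sup_right : C ≤ N ⊔ C)
    (fun g => orbit_infinite_of_mem_sup_finiteOrbitClosure N) x
  have hφx : (φ x : G ⧸ N) ∈ commutator (G ⧸ N) := by
    rw [← map_commutator_of_surjective (QuotientGroup.mk'_surjective N)]
    exact Subgroup.mem_map_of_mem _ ((Subgroup.Characteristic.apply_mem_iff φ).mpr hxG)
  obtain ⟨y, hy, hyord⟩ := Subgroup.exists_mem_orderOf_eq_orderOf_map
    (fun _ => QuotientGroup.isOfFinOrder_of_map_eq_one (le_sup_left : N ≤ N ⊔ C)) hφx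
  exact ⟨y, hy, hyord.trans hφ⟩

/-- **Spectrum theorem for commutator subgroups.** For any finite normal subgroup `N` of a
group `G` of bounded exponent, there is a characteristic finite subgroup `H` of `G` such
that every element of the commutator subgroup of `G/H` has the same order as some element
of the commutator subgroup of `G/N`. -/
theorem stmt_12 {G : Type*} [Group G] (e : ℕ) (he : 1 ≤ e)
    (hexp : ∀ g : G, g ^ e = 1)
    (N : Subgroup G) (hN : N.Normal) (hNfin : Finite ↥N) :
    ∃ (H : Subgroup G) (hH : H.Normal), H.Characteristic ∧ Finite ↥H ∧
      CommSpectrumLE H N hH hN :=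
  stmt_12_general N hN hNfin
end

section
/- There exists a group G having a normal abelian subgroup N such that the quotient G/N is countable, but such that there is no characteristic subgroup H of G which is abelian and for which the quotient G/H is countable. -/
/-!
Let `V = (ℕ → 𝔽₂)` and `W = (ℕ →₀ 𝔽₂)`, paired by `⟨v, w⟩ = ∑ wᵢ vᵢ`, and let `G` be the central
extension of `V × W` by `ℤ/4` with cocycle `2⟨v, w'⟩`. The elements with `w = 0` form a normal
abelian subgroup of countable index. But `G` has the automorphisms `(v, w, t) ↦ (v, w + vᵢ eᵢ, t + ṽᵢ)`
(`ṽᵢ ∈ {0, 1} ⊆ ℤ/4` lifting `vᵢ`), and if `g` has `vᵢ = 1` then the image of `g` under this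
automorphism times `g⁻¹` does not commute with `g`. So every characteristic abelian subgroup lies
in `{v = 0}`, which is countable, while `G` is not.
-/

namespace Cornulier

def pairing (v : ℕ → ZMod 2) (w : ℕ →₀ ZMod 2) : ZMod 2 := w.sum fun i a => a * v i

@[simp] lemma pairing_zero_left (w : ℕ →₀ ZMod 2) : pairing 0 w = 0 := by simp [pairing]

@[simp] lemma pairing_zero_right (v : ℕ → ZMod 2) : pairing v 0 = 0 := Finsupp.sum_zero_index

lemma pairing_add_left (v v' : ℕ → ZMod 2) (w : ℕ →₀ ZMod 2) :
    pairing (v + v') w = pairing v w + pairing v' w := by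
  simp only [pairing, Pi.add_apply, mul_add]
  exact Finsupp.sum_add

lemma pairing_add_right (v : ℕ → ZMod 2) (w w' : ℕ →₀ ZMod 2) :
    pairing v (w + w') = pairing v w + pairing v w' :=
  Finsupp.sum_add_index (by simp) (by intros; ring)

@[simp] lemma pairing_single (v : ℕ → ZMod 2) (i : ℕ) (c : ZMod 2) :
    pairing v (Finsupp.single i c) = c * v i :=
  Finsupp.sum_single_index (by simp)

def dbl (x : ZMod 2) : ZMod 4 := 2 * x.val

def lift (x : ZMod 2) : ZMod 4 := x.val

lemma dbl_add : ∀ x y : ZMod 2, dbl (x + y) = dbl x + dbl y := by decide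

@[simp] lemma dbl_zero : dbl 0 = 0 := rfl

lemma dbl_injective : Function.Injective dbl := by decide

lemma lift_add : ∀ x y : ZMod 2, lift (x + y) = lift x + lift y + dbl (x * y) := by decide

@[ext] structure Grp where
  v : ℕ → ZMod 2
  w : ℕ →₀ ZMod 2
  t : ZMod 4

namespace Grp

noncomputable instance : Mul Grp := ⟨fun g h => ⟨g.v + h.v, g.w + h.w, g.t + h.t + dbl (pairing g.v h.w)⟩⟩
instance : One Grp := ⟨⟨0, 0, 0⟩⟩
noncomputable instance : Inv Grp := ⟨fun g => ⟨g.v, g.w, -g.t - dbl (pairing g.v g.w)⟩⟩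

@[simp] lemma mul_v (g h : Grp) : (g * h).v = g.v + h.v := rfl
@[simp] lemma mul_w (g h : Grp) : (g * h).w = g.w + h.w := rfl
@[simp] lemma mul_t (g h : Grp) : (g * h).t = g.t + h.t + dbl (pairing g.v h.w) := rfl
@[simp] lemma one_v : (1 : Grp).v = 0 := rfl
@[simp] lemma one_w : (1 : Grp).w = 0 := rfl
@[simp] lemma one_t : (1 : Grp).t = 0 := rfl
@[simp] lemma inv_v (g : Grp) : g⁻¹.v = g.v := rfl
@[simp] lemma inv_w (g : Grp) : g⁻¹.w = g.w := rfl
@[simp] lemma inv_t (g : Grp) : g⁻¹.t = -g.t - dbl (pairing g.v g.w) := rfl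

noncomputable instance : Group Grp where
  mul_assoc a b c := by
    ext : 1
    · simp [add_assoc]
    · simp [add_assoc]
    · simp only [mul_t, mul_v, mul_w, pairing_add_left, pairing_add_right, dbl_add]
      abel
  one_mul a := by ext : 1 <;> simp
  mul_one a := by ext : 1 <;> simp
  inv_mul_cancel a := by
    ext : 1
    · simp [ZModModule.add_self]
    · simp [ZModModule.add_self]
    · simp only [mul_t, inv_t, inv_v, one_t]
      abel

lemma mul_comm_iff (g h : Grp) : g * h = h * g ↔ pairing g.v h.w = pairing h.v g.w := by
  rw [← dbl_injective.eq_iff, Grp.ext_iff]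
  simp only [mul_v, mul_w, mul_t, add_comm g.v, add_comm g.w, add_comm g.t, true_and,
    add_right_inj]

noncomputable def projW : Grp →* Multiplicative (ℕ →₀ ZMod 2) where
  toFun g := Multiplicative.ofAdd g.w
  map_one' := rfl
  map_mul' _ _ := rfl

lemma mem_ker_projW {g : Grp} : g ∈ projW.ker ↔ g.w = 0 := Iff.rfl

lemma ker_projW_mul_comm (x y : projW.ker) : x * y = y * x :=
  Subtype.ext <| (mul_comm_iff _ _).2 <| by
    rw [mem_ker_projW.1 x.2, mem_ker_projW.1 y.2, pairing_zero_right, pairing_zero_right]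

lemma countable_quotient_ker_projW : Countable (Grp ⧸ projW.ker) :=
  (Multiplicative.toAdd.injective.comp (QuotientGroup.kerLift_injective projW)).countable

noncomputable def transvection (i : ℕ) : Grp ≃* Grp where
  toFun g := ⟨g.v, g.w + Finsupp.single i (g.v i), g.t + lift (g.v i)⟩
  invFun g := ⟨g.v, g.w + Finsupp.single i (g.v i), g.t - lift (g.v i)⟩
  left_inv g := by ext : 1 <;> simp [add_assoc, ZModModule.add_self]
  right_inv g := by ext : 1 <;> simp [add_assoc, ZModModule.add_self]
  map_mul' g h := by
    ext : 1
    · rfl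
    · simp only [mul_w, mul_v, Pi.add_apply, Finsupp.single_add]
      abel
    · simp only [mul_t, mul_v, Pi.add_apply, lift_add, pairing_add_right, pairing_single,
        dbl_add, mul_comm (g.v i) (h.v i)]
      abel

lemma transvection_mul_inv_v (i : ℕ) (g : Grp) : (transvection i g * g⁻¹).v = 0 :=
  ZModModule.add_self g.v

lemma transvection_mul_inv_w (i : ℕ) (g : Grp) :
    (transvection i g * g⁻¹).w = Finsupp.single i (g.v i) := by
  show g.w + Finsupp.single i (g.v i) + g.w = _
  rw [add_right_comm, ZModModule.add_self, zero_add]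

/-- If `gᵢ = 1`, then `k = transvection i g * g⁻¹` has `⟨g.v, k.w⟩ = 1 ≠ 0 = ⟨k.v, g.w⟩`. -/
lemma v_eq_zero_of_mem {H : Subgroup Grp} (hchar : H.Characteristic)
    (hcomm : ∀ x y : H, x * y = y * x) {g : Grp} (hg : g ∈ H) : g.v = 0 := by
  funext i
  by_contra hne
  have hgi : g.v i = 1 := (by decide : ∀ c : ZMod 2, c ≠ 0 → c = 1) _ hne
  have htg : transvection i g ∈ H := by
    rw [← hchar.fixed (transvection i)] at hg
    exact hg
  have hk : transvection i g * g⁻¹ ∈ H := H.mul_mem htg (H.inv_mem hg)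
  have hpair := (mul_comm_iff _ _).1 (congrArg Subtype.val (hcomm ⟨_, hk⟩ ⟨g, hg⟩))
  rw [transvection_mul_inv_v, transvection_mul_inv_w, pairing_zero_left, pairing_single, hgi,
    one_mul] at hpair
  exact zero_ne_one hpair

lemma countable_of_forall_v_eq_zero {H : Subgroup Grp} (hH : ∀ g ∈ H, g.v = 0) : Countable H := by
  refine Function.Injective.countable (f := fun g : H => ((g : Grp).w, (g : Grp).t)) ?_
  intro a b hab
  obtain ⟨hw, ht⟩ := Prod.mk.inj hab
  exact Subtype.ext (Grp.ext ((hH _ a.2).trans (hH _ b.2).symm) hw ht)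

instance : Uncountable Grp :=
  have : Uncountable (ℕ → ZMod 2) := by
    rw [← Cardinal.aleph0_lt_mk_iff]
    simpa using Cardinal.aleph0_lt_continuum
  Function.Injective.uncountable (f := fun v => (⟨v, 0, 0⟩ : Grp)) fun _ _ h => congrArg Grp.v h

end Grp

end Cornulier

open Cornulier Grp in
/-- **Cornulier's example.** There is a group `G` with a normal abelian subgroup `N` such
that `G/N` is countable, but with no characteristic abelian subgroup `H` such that `G/H` is
countable. -/
theorem stmt_13 :
    ∃ (G : Type) (_ : Group G) (N : Subgroup G),
      N.Normal ∧ (∀ x y : ↥N, x * y = y * x) ∧ Countable (G ⧸ N) ∧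
      ¬ ∃ H : Subgroup G, H.Characteristic ∧ (∀ x y : ↥H, x * y = y * x) ∧
          Countable (G ⧸ H) := by
  refine ⟨Grp, inferInstance, projW.ker, projW.normal_ker, ker_projW_mul_comm,
    countable_quotient_ker_projW, ?_⟩
  rintro ⟨H, hchar, hcomm, hquot⟩
  have : Countable H := countable_of_forall_v_eq_zero fun _ hg => v_eq_zero_of_mem hchar hcomm hg
  exact not_countable (Countable.of_equiv _ (Subgroup.groupEquivQuotientProdSubgroup (s := H)).symm)
end

section
/- There exists a group G having a finite normal subgroup N such that every element of the quotient group G/N is a square (for every x in G/N there is y in G/N with x = y²), while there is no finite characteristic subgroup H of G such that every element of the quotient group G/H is a square. -/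
/-!
Take `G = ℤˣ × (ℕ → ℂˣ)` and `N = ℤˣ × 1`, so that `G ⧸ N ≅ ℕ → ℂˣ`, in which every element
is a square. If `G ⧸ H` is 2-divisible, then `(-1, 1) = g² h` for some `h ∈ H`, and `h` has
first coordinate `-1` because squares in `ℤˣ` are trivial. For every `f : ℤˣ →* (ℕ → ℂˣ)` the
shear `(a, b) ↦ (a, b * f a)` is an automorphism of `G`. Letting `f` send `-1` to the `n`-th
coordinate vector `-1`, a characteristic `H` contains the pairwise distinct images of `h` under
these shears, so it is infinite.
-/

open Function

theorem Pi.mulSingle_left_injective {ι M : Type*} [DecidableEq ι] [One M] {a : M} (ha : a ≠ 1) :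
    Injective fun i : ι => Pi.mulSingle i a := by
  intro i j hij
  by_contra hne
  have := congrFun hij i
  simp only [Pi.mulSingle_eq_same, Pi.mulSingle_eq_of_ne hne] at this
  exact ha this

theorem IsAlgClosed.units_exists_sq {k : Type*} [Field k] [IsAlgClosed k] (u : kˣ) :
    ∃ v : kˣ, v ^ 2 = u := by
  obtain ⟨z, hz⟩ := IsAlgClosed.exists_pow_nat_eq (u : k) two_pos
  have hz0 : z ≠ 0 := by
    rintro rfl
    exact u.ne_zero (by simpa using hz.symm)
  exact ⟨Units.mk0 z hz0, Units.ext (by simpa using hz)⟩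

namespace QuotientGroup

variable {G : Type*} [Group G]

theorem forall_exists_sq_of_surjective {Q : Type*} [Group Q] {f : G →* Q} (hf : Surjective f)
    (hQ : ∀ q : Q, ∃ r, r ^ 2 = q) (x : G ⧸ f.ker) : ∃ y, y ^ 2 = x := by
  let e := quotientKerEquivOfSurjective f hf
  obtain ⟨r, hr⟩ := hQ (e x)
  exact ⟨e.symm r, by rw [← map_pow, hr, e.symm_apply_apply]⟩

theorem exists_sq_inv_mul_mem {N : Subgroup G} [N.Normal] (hN : ∀ x : G ⧸ N, ∃ y, y ^ 2 = x)
    (g : G) : ∃ y : G, (y ^ 2)⁻¹ * g ∈ N := by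
  obtain ⟨y, hy⟩ := hN g
  obtain ⟨y, rfl⟩ := mk_surjective y
  exact ⟨y, QuotientGroup.eq.mp hy⟩

end QuotientGroup

section Shear

variable {A B : Type*} [Group A] [CommGroup B]

def MulEquiv.prodShear (f : A →* B) : A × B ≃* A × B where
  toEquiv := (Equiv.refl A).prodShear fun a => Equiv.mulRight (f a)
  map_mul' x y := by
    simp only [Equiv.toFun_as_coe, Equiv.prodShear_apply, Equiv.refl_apply, Equiv.coe_mulRight,
      Prod.fst_mul, Prod.snd_mul, map_mul, Prod.mk_mul_mk, mul_mul_mul_comm]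

@[simp]
theorem MulEquiv.prodShear_apply (f : A →* B) (x : A × B) :
    MulEquiv.prodShear f x = (x.1, x.2 * f x.1) :=
  rfl

theorem Subgroup.infinite_of_characteristic_prod {H : Subgroup (A × B)} [H.Characteristic]
    {x : A × B} (hx : x ∈ H) {ι : Type*} [Infinite ι] (f : ι → A →* B)
    (hf : Injective fun i => f i x.1) : Infinite H := by
  have hmem (i : ι) : MulEquiv.prodShear (f i) x ∈ H :=
    Subgroup.characteristic_iff_le_comap.mp ‹_› (MulEquiv.prodShear (f i)) hx
  refine Infinite.of_injective (fun i => (⟨MulEquiv.prodShear (f i) x, hmem i⟩ : H))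
    fun i j hij => hf ?_
  simpa using congrArg (fun y : H => (y : A × B).2) hij

end Shear

/-- There is a group `G` with a finite normal subgroup `N` such that every element of `G/N`
is a square, but with no finite characteristic subgroup `H` such that every element of `G/H`
is a square. -/
theorem stmt_14 :
    ∃ (G : Type) (_ : Group G) (N : Subgroup G) (hN : N.Normal),
      Finite ↥N ∧
      (haveI := hN; ∀ x : G ⧸ N, ∃ y : G ⧸ N, y ^ 2 = x) ∧
      ¬ ∃ (H : Subgroup G) (hH : H.Normal), H.Characteristic ∧ Finite ↥H ∧
          (haveI := hH; ∀ x : G ⧸ H, ∃ y : G ⧸ H, y ^ 2 = x) := by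
  refine ⟨ℤˣ × (ℕ → ℂˣ), inferInstance, (MonoidHom.snd _ _).ker, inferInstance, ?_, ?_, ?_⟩
  · rw [MonoidHom.ker_snd]
    exact Finite.of_equiv _ (Subgroup.prodEquiv ⊤ ⊥).symm.toEquiv
  · refine QuotientGroup.forall_exists_sq_of_surjective Prod.snd_surjective fun b => ?_
    choose c hc using fun n => IsAlgClosed.units_exists_sq (b n)
    exact ⟨c, funext hc⟩
  · rintro ⟨H, _, _, _, hsq⟩
    obtain ⟨g, hg⟩ := QuotientGroup.exists_sq_inv_mul_mem hsq (-1, 1)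
    have hfst : ((g ^ 2)⁻¹ * (-1, 1) : ℤˣ × (ℕ → ℂˣ)).1 = -1 := by simp [Int.units_sq]
    have : Infinite H := Subgroup.infinite_of_characteristic_prod hg
      (fun n => (MonoidHom.mulSingle _ n).comp (Units.map (Int.castRingHom ℂ))) (by
        simpa [hfst] using Pi.mulSingle_left_injective (by norm_num : (-1 : ℂˣ) ≠ 1))
    exact not_finite H
end

section
/- Let G be a simple graph and let Γ₁,…,Γ_l be finitely many finite simple graphs (the forbidden graphs), each having at most t edges, where t ≥ 1. Suppose there is a finite set N̄ of edges of G such that the graph obtained from G by deleting the edges in N̄ contains no subgraph isomorphic to any Γᵢ. Then there exists a finite set H̄ of edges of G such that: (1) H̄ is invariant under every automorphism of G, i.e., every automorphism of G maps the set of edges H̄ onto itself; (2) the graph obtained from G by deleting the edges in H̄ contains no subgraph isomorphic to any Γᵢ; (3) |H̄| ≤ f^{t−1}(|N̄|); (4) if H̄ is nonempty then H̄ ∩ N̄ is nonempty. -/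
/-!
Let `C` be the family of edge sets of copies of the `Γᵢ` in `G`; a set of edges destroys every
copy exactly when it meets every member of `C`, i.e. is a transversal of `C`. Take for `H̄` the
edges `e` that are critical: some transversal with at most `|N̄|` elements meets some member
of `C` in `{e}` alone. This set is defined from `G` alone, hence automorphism invariant, and a
minimal transversal inside `N̄` consists of critical edges, so `H̄` is a transversal meeting `N̄`.

For the size bound fix one transversal `T₀` with `|T₀| ≤ n`. A critical `e ∉ T₀`, witnessed by
`T` and `K ∩ T = {e}`, is critical for the same `T` in the link `{K \ {g} : g ∈ K ∈ C}` at any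
`g ∈ K ∩ T₀`, whose members are one element smaller. So if the members of `C` have at most
`k + 1` elements, induction on `k` bounds the number of critical elements by `n` for `k = 0`
(the links then consist of empty sets) and by `n + n · f^{k-1}(n) ≤ f^k(n)` otherwise.
-/

open Set Function SimpleGraph

section Transversal

variable {α β : Type*} {C : Set (Set α)} {T T' T₀ : Set α} {n : ℕ}

def IsTransversal (C : Set (Set α)) (T : Set α) : Prop := ∀ K ∈ C, (K ∩ T).Nonempty

def critical (C : Set (Set α)) (n : ℕ) : Set α :=
  {e | ∃ T, IsTransversal C T ∧ T.encard ≤ n ∧ ∃ K ∈ C, K ∩ T = {e}}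

def link (C : Set (Set α)) (g : α) : Set (Set α) := (· \ {g}) '' {K ∈ C | g ∈ K}

theorem IsTransversal.mono (hT : IsTransversal C T) (h : T ⊆ T') : IsTransversal C T' :=
  fun K hK => (hT K hK).mono (inter_subset_inter_right K h)

theorem IsTransversal.link {g : α} (hT : IsTransversal C T) (hg : g ∉ T) :
    IsTransversal (link C g) T := by
  rintro _ ⟨K, ⟨hK, -⟩, rfl⟩
  obtain ⟨x, hxK, hxT⟩ := hT K hK
  exact ⟨x, ⟨hxK, by rintro rfl; exact hg hxT⟩, hxT⟩

theorem encard_le_of_mem_link {m : ℕ∞} {g : α} {S : Set α} (hC : ∀ K ∈ C, K.encard ≤ m + 1)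
    (hS : S ∈ link C g) : S.encard ≤ m := by
  obtain ⟨K, ⟨hK, hgK⟩, rfl⟩ := hS
  have := encard_sdiff_singleton_add_one hgK ▸ hC K hK
  exact (ENat.add_le_add_iff_right ENat.one_ne_top).1 this

theorem critical_subset_sUnion (C : Set (Set α)) (n : ℕ) : critical C n ⊆ ⋃₀ C := by
  rintro e ⟨T, -, -, K, hK, hKT⟩
  exact ⟨K, hK, (hKT.symm ▸ mem_singleton e : e ∈ K ∩ T).1⟩

theorem critical_subset_union_biUnion_link (hT₀ : IsTransversal C T₀) :
    critical C n ⊆ T₀ ∪ ⋃ g ∈ T₀, critical (link C g) n := by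
  rintro e ⟨T, hT, hTn, K, hK, hKT⟩
  by_cases he : e ∈ T₀
  · exact Or.inl he
  obtain ⟨g, hgK, hgT₀⟩ := hT₀ K hK
  have hge : g ≠ e := by rintro rfl; exact he hgT₀
  have hgT : g ∉ T := fun hgT => hge (by rw [← mem_singleton_iff, ← hKT]; exact ⟨hgK, hgT⟩)
  refine Or.inr (mem_biUnion hgT₀ ⟨T, hT.link hgT, hTn, K \ {g}, ⟨K, ⟨hK, hgK⟩, rfl⟩, ?_⟩)
  rw [← inter_sdiff_right_comm, hKT, sdiff_singleton_eq_self (mt mem_singleton_iff.1 hge)]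

theorem encard_biUnion_le_mul {ι : Type*} {s : Set ι} {f : ι → Set α} {M : ℕ∞}
    (hs : s.Finite) (hf : ∀ i ∈ s, (f i).encard ≤ M) : (⋃ i ∈ s, f i).encard ≤ s.encard * M := by
  induction s, hs using Set.Finite.induction_on with
  | empty => simp
  | @insert a s ha _ ih =>
    rw [biUnion_insert, encard_insert_of_notMem ha, add_mul, one_mul, add_comm]
    exact (encard_union_le _ _).trans
      (add_le_add (hf a (mem_insert a s)) (ih fun i hi => hf i (mem_insert_of_mem a hi)))

theorem encard_critical_le_of_forall_link {M : ℕ∞}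
    (hM : ∀ g, (critical (link C g) n).encard ≤ M) : (critical C n).encard ≤ n + n * M := by
  rcases (critical C n).eq_empty_or_nonempty with h | ⟨e, T₀, hT₀, hT₀n, -⟩
  · simp [h]
  calc (critical C n).encard ≤ (T₀ ∪ ⋃ g ∈ T₀, critical (link C g) n).encard :=
        encard_le_encard (critical_subset_union_biUnion_link hT₀)
    _ ≤ T₀.encard + (⋃ g ∈ T₀, critical (link C g) n).encard := encard_union_le _ _
    _ ≤ T₀.encard + T₀.encard * M :=
        add_le_add_right (encard_biUnion_le_mul (finite_of_encard_le_coe hT₀n) fun g _ => hM g) _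
    _ ≤ n + n * M := add_le_add hT₀n (mul_le_mul_left hT₀n M)

theorem le_iterate_mul_succ (k n : ℕ) : n ≤ (fun x : ℕ => x * (x + 1))^[k] n :=
  id_le_iterate_of_id_le (fun x => Nat.le_mul_of_pos_right x x.succ_pos) k n

theorem encard_critical_le_iterate (k : ℕ) (hC : ∀ K ∈ C, K.encard ≤ k + 1) :
    (critical C n).encard ≤ ((fun x : ℕ => x * (x + 1))^[k] n : ℕ) := by
  induction k generalizing C with
  | zero =>
    have hlink : ∀ g, (critical (link C g) n).encard ≤ 0 := fun g => by
      rw [nonpos_iff_eq_zero, encard_eq_zero, ← subset_empty_iff]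
      refine (critical_subset_sUnion _ n).trans (sUnion_subset fun S hS => ?_)
      simpa using encard_le_of_mem_link (m := 0) (by simpa using hC) hS
    simpa using encard_critical_le_of_forall_link hlink
  | succ k ih =>
    have hlink : ∀ g, (critical (link C g) n).encard ≤ _ := fun g =>
      ih fun S hS => encard_le_of_mem_link (by exact_mod_cast hC) hS
    have hn := le_iterate_mul_succ k n
    refine (encard_critical_le_of_forall_link hlink).trans ?_
    rw [iterate_succ_apply']
    norm_cast
    nlinarith

theorem exists_isTransversal_subset_critical {N : Finset α} (hN : IsTransversal C N) :
    ∃ T ⊆ (N : Set α), IsTransversal C T ∧ T ⊆ critical C N.card := by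
  classical
  obtain ⟨T, hTN, hT⟩ :=
    exists_minimal_le_of_wellFoundedLT (fun T : Finset α => IsTransversal C T) N hN
  refine ⟨T, Finset.coe_subset.2 hTN, hT.prop, fun e he => ⟨T, hT.prop, ?_, ?_⟩⟩
  · simpa using Finset.card_le_card hTN
  have herase := hT.not_prop_of_lt (Finset.erase_ssubset he)
  simp only [IsTransversal, not_forall, not_nonempty_iff_eq_empty] at herase
  obtain ⟨K, hK, hKe⟩ := herase
  refine ⟨K, hK, (hT.prop K hK).subset_singleton_iff.1 fun x ⟨hxK, hxT⟩ => ?_⟩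
  by_contra hxe
  exact (hKe ▸ (⟨hxK, by simpa [hxe] using hxT⟩ : x ∈ K ∩ ↑(T.erase e)) : x ∈ (∅ : Set α))

theorem image_critical_subset {σ : α → β} (hσ : Injective σ) :
    σ '' critical C n ⊆ critical ((σ '' ·) '' C) n := by
  rintro _ ⟨e, ⟨T, hT, hTn, K, hK, hKT⟩, rfl⟩
  refine ⟨σ '' T, ?_, hσ.encard_image T ▸ hTn, σ '' K, mem_image_of_mem _ hK, ?_⟩
  · rintro _ ⟨K', hK', rfl⟩
    exact ((hT K' hK').image σ).mono (image_inter_subset _ _ _)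
  · rw [← image_inter hσ, hKT, image_singleton]

end Transversal

section Copies

variable {V V' ι : Type*} {W : ι → Type*} {G : SimpleGraph V} {G' : SimpleGraph V'}
  {Γ : ∀ i, SimpleGraph (W i)} {K : Set (Sym2 V)}

variable (G Γ) in
def copyEdgeSets : Set (Set (Sym2 V)) :=
  {K | ∃ i, ∃ f : Γ i →g G, Injective f ∧ K = Sym2.map f '' (Γ i).edgeSet}

theorem subset_edgeSet_of_mem_copyEdgeSets (hK : K ∈ copyEdgeSets G Γ) : K ⊆ G.edgeSet := by
  obtain ⟨i, f, -, rfl⟩ := hK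
  exact image_subset_iff.2 fun _ => f.map_mem_edgeSet

theorem encard_le_of_mem_copyEdgeSets [∀ i, Finite (W i)] {t : ℕ}
    (hΓ : ∀ i, (Γ i).edgeSet.ncard ≤ t) (hK : K ∈ copyEdgeSets G Γ) : K.encard ≤ t := by
  obtain ⟨i, f, -, rfl⟩ := hK
  calc (Sym2.map f '' (Γ i).edgeSet).encard ≤ (Γ i).edgeSet.encard := encard_image_le _ _
    _ = (Γ i).edgeSet.ncard := (toFinite _).cast_ncard_eq.symm
    _ ≤ t := by exact_mod_cast hΓ i

theorem isTransversal_copyEdgeSets_iff (s : Set (Sym2 V)) :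
    IsTransversal (copyEdgeSets G Γ) s ↔ ∀ i, ¬ ∃ f : Γ i →g G.deleteEdges s, Injective f := by
  constructor
  · rintro hs i ⟨f, hf⟩
    obtain ⟨_, ⟨z, hz, rfl⟩, hzs⟩ := hs _ ⟨i, (Hom.ofLE (G.deleteEdges_le s)).comp f, hf, rfl⟩
    have := f.map_mem_edgeSet hz
    rw [edgeSet_deleteEdges] at this
    exact this.2 hzs
  · rintro hs K ⟨i, f, hf, rfl⟩
    by_contra hK
    refine hs i ⟨⟨f, fun {a b} hab => ?_⟩, hf⟩
    rw [deleteEdges_adj]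
    exact ⟨f.map_adj hab, fun hmem => hK ⟨_, ⟨s(a, b), hab, rfl⟩, hmem⟩⟩

theorem image_mem_copyEdgeSets {φ : G →g G'} (hφ : Injective φ) (hK : K ∈ copyEdgeSets G Γ) :
    Sym2.map φ '' K ∈ copyEdgeSets G' Γ := by
  obtain ⟨i, f, hf, rfl⟩ := hK
  exact ⟨i, φ.comp f, hφ.comp hf, by simp [image_image, Sym2.map_map]⟩

theorem image_copyEdgeSets (φ : G ≃g G') :
    (fun K => Sym2.map φ '' K) '' copyEdgeSets G Γ = copyEdgeSets G' Γ := by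
  refine Subset.antisymm ?_ fun K hK =>
    ⟨Sym2.map φ.symm '' K, image_mem_copyEdgeSets (φ := φ.symm.toHom) φ.symm.injective hK, ?_⟩
  · rintro _ ⟨K, hK, rfl⟩
    exact image_mem_copyEdgeSets (φ := φ.toHom) φ.injective hK
  · simp [image_image, Sym2.map_map]

theorem image_critical_copyEdgeSets (φ : G ≃g G) (n : ℕ) :
    Sym2.map φ '' critical (copyEdgeSets G Γ) n = critical (copyEdgeSets G Γ) n := by
  have hsub (ψ : G ≃g G) :
      Sym2.map ψ '' critical (copyEdgeSets G Γ) n ⊆ critical (copyEdgeSets G Γ) n := by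
    simpa only [image_copyEdgeSets] using
      image_critical_subset (C := copyEdgeSets G Γ) (n := n) (Sym2.map.injective ψ.injective)
  refine (hsub φ).antisymm fun e he => ⟨Sym2.map φ.symm e, hsub φ.symm ⟨e, he, rfl⟩, ?_⟩
  simp [Sym2.map_map]

end Copies

theorem stmt_15_general {V : Type*} (G : SimpleGraph V) {l t : ℕ}
    (W : Fin l → Type) [∀ i, Finite (W i)] (Γ : ∀ i, SimpleGraph (W i))
    (hedges : ∀ i, (Γ i).edgeSet.ncard ≤ t)
    (N' : Finset (Sym2 V))
    (hN' : ∀ i, ¬ ∃ f : Γ i →g G.deleteEdges ↑N', Function.Injective f) :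
    ∃ H' : Finset (Sym2 V), ↑H' ⊆ G.edgeSet ∧
      (∀ φ : G ≃g G, Sym2.map ⇑φ '' ↑H' = (↑H' : Set (Sym2 V))) ∧
      (∀ i, ¬ ∃ f : Γ i →g G.deleteEdges ↑H', Function.Injective f) ∧
      H'.card ≤ (fun x : ℕ => x * (x + 1))^[t - 1] N'.card ∧
      (H'.Nonempty → ((↑H' : Set (Sym2 V)) ∩ ↑N').Nonempty) := by
  set H := critical (copyEdgeSets G Γ) N'.card
  obtain ⟨T, hTN, hT, hTH⟩ :=
    exists_isTransversal_subset_critical ((isTransversal_copyEdgeSets_iff _).2 hN')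
  have hcard : H.encard ≤ ((fun x : ℕ => x * (x + 1))^[t - 1] N'.card : ℕ) :=
    encard_critical_le_iterate (t - 1) fun K hK =>
      (encard_le_of_mem_copyEdgeSets hedges hK).trans (by norm_cast; omega)
  have hH := finite_of_encard_le_coe hcard
  refine ⟨hH.toFinset, ?_, ?_, ?_, ?_, ?_⟩
  · simpa using (critical_subset_sUnion _ _).trans
      (sUnion_subset fun K hK => subset_edgeSet_of_mem_copyEdgeSets hK)
  · simpa using fun φ => image_critical_copyEdgeSets (Γ := Γ) φ N'.card
  · exact (isTransversal_copyEdgeSets_iff _).1 (by simpa using hT.mono hTH)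
  · simpa [hH.encard_eq_coe_toFinset_card] using hcard
  · rintro ⟨e, he⟩
    obtain ⟨K, hK, -⟩ := critical_subset_sUnion _ _ (hH.mem_toFinset.1 he)
    obtain ⟨x, -, hxT⟩ := hT K hK
    exact ⟨x, by simpa using hTH hxT, hTN hxT⟩

/-- **Forbidden-subgraph theorem.** Let `Γ₁,…,Γ_l` be finitely many finite forbidden graphs,
each with at most `t` edges. If deleting a finite set `N̄` of edges of `G` destroys all
subgraphs isomorphic to the forbidden graphs, then there is a finite set `H̄` of edges of
`G`, invariant under all automorphisms of `G`, doing the same, with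
`|H̄| ≤ f^{t-1}(|N̄|)` (where `f(x) = x(x+1)`); moreover `H̄ ∩ N̄ ≠ ∅` whenever `H̄ ≠ ∅`. -/
theorem stmt_15 {V : Type*} (G : SimpleGraph V) {l t : ℕ} (ht : 1 ≤ t)
    (W : Fin l → Type) [∀ i, Finite (W i)] (Γ : ∀ i, SimpleGraph (W i))
    (hedges : ∀ i, (Γ i).edgeSet.ncard ≤ t)
    (N' : Finset (Sym2 V)) (hN'sub : ↑N' ⊆ G.edgeSet)
    (hN' : ∀ i, ¬ ∃ f : Γ i →g G.deleteEdges ↑N', Function.Injective f) :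
    ∃ H' : Finset (Sym2 V), ↑H' ⊆ G.edgeSet ∧
      (∀ φ : G ≃g G, Sym2.map ⇑φ '' ↑H' = (↑H' : Set (Sym2 V))) ∧
      (∀ i, ¬ ∃ f : Γ i →g G.deleteEdges ↑H', Function.Injective f) ∧
      H'.card ≤ (fun x : ℕ => x * (x + 1))^[t - 1] N'.card ∧
      (H'.Nonempty → ((↑H' : Set (Sym2 V)) ∩ ↑N').Nonempty) :=
  stmt_15_general G W Γ hedges N' hN'
end

section
/- Let G be a simple graph and let N̄ be a finite set of edges of G. Then there exists a finite set H̄ of edges of G, invariant under every automorphism of G (every automorphism of G maps the set of edges H̄ onto itself), such that the graph obtained from G by deleting the edges in H̄ locally embeds into the graph obtained from G by deleting the edges in N̄. -/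
/-
Let `A` be the automorphism group of `G`, acting on edges. Take `H̄` to be the union of the finite
`A`-orbits that meet `N̄`; it is finite and `A`-invariant. A finite graph embedded in `G ∖ H̄` uses
finitely many edges `F`, and those with finite orbit never meet `N̄` under any automorphism. For the
others, B. H. Neumann's lemma (a group is not a finite union of cosets of infinite-index subgroups)
gives one automorphism `φ` moving all of them off `N̄` at once, since
`{φ | φ • x = y}` is a coset of the stabilizer of `x`, whose index is the size of the orbit of `x`.
Composing the embedding with `φ` lands in `G ∖ N̄`.
-/

def LocallyEmbeds {V₁ V₂ : Type*} (X : SimpleGraph V₁) (Y : SimpleGraph V₂) : Prop :=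
  ∀ (W : Type) [Finite W] (Γ : SimpleGraph W),
    (∃ f : Γ →g X, Function.Injective f) → ∃ g : Γ →g Y, Function.Injective g

open MulAction
open scoped Pointwise

instance Sym2.instMulAction {M α : Type*} [Monoid M] [MulAction M α] : MulAction M (Sym2 α) where
  smul m := Sym2.map (m • ·)
  one_smul e := by
    change Sym2.map _ e = e
    simp only [one_smul, Sym2.map_id', id]
  mul_smul m n e := by
    change Sym2.map _ e = Sym2.map _ (Sym2.map _ e)
    rw [Sym2.map_map]
    simp only [Function.comp_def, mul_smul]

namespace MulAction

variable {G X : Type*} [Group G] [MulAction G X]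

theorem exists_smul_notMem_of_orbit_infinite_s16 {S F : Set X} (hS : S.Finite) (hF : F.Finite)
    (hinf : ∀ x ∈ F, (orbit G x).Infinite) : ∃ g : G, ∀ x ∈ F, g • x ∉ S := by
  classical
  by_contra! hcover
  let s := (hF.toFinset ×ˢ hS.toFinset).filter fun p : X × X => ∃ g : G, g • p.1 = p.2
  have hs : ∀ p ∈ s, ∃ g : G, g • p.1 = p.2 := fun p hp => (Finset.mem_filter.mp hp).2
  choose! g hg using hs
  -- `{ψ | ψ • x = y}` is the left coset `g (x, y) • stabilizer G x`
  have hcovers : ⋃ p ∈ s, g p • (stabilizer G p.1 : Set G) = Set.univ := by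
    refine Set.eq_univ_of_forall fun ψ => ?_
    obtain ⟨x, hxF, hxS⟩ := hcover ψ
    have hp : (x, ψ • x) ∈ s := Finset.mem_filter.mpr
      ⟨Finset.mem_product.mpr ⟨hF.mem_toFinset.mpr hxF, hS.mem_toFinset.mpr hxS⟩, ψ, rfl⟩
    refine Set.mem_biUnion hp ?_
    rw [Set.mem_smul_set_iff_inv_smul_mem, SetLike.mem_coe, mem_stabilizer_iff, smul_eq_mul,
      mul_smul, inv_smul_eq_iff]
    exact (hg _ hp).symm
  obtain ⟨p, hp, hfin⟩ := Subgroup.exists_finiteIndex_of_leftCoset_cover hcovers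
  have hpF : p.1 ∈ F := hF.mem_toFinset.mp (Finset.mem_product.mp (Finset.mem_filter.mp hp).1).1
  apply hfin.index_ne_zero
  rw [index_stabilizer, (hinf p.1 hpF).ncard]

variable (G) in
def finiteOrbitsMeeting (S : Set X) : Set X :=
  {x | (orbit G x).Finite ∧ ∃ g : G, g • x ∈ S}

variable {S : Set X}

theorem finite_finiteOrbitsMeeting (hS : S.Finite) : (finiteOrbitsMeeting G S).Finite := by
  refine ((hS.inter_of_left {x | (orbit G x).Finite}).biUnion fun x hx => hx.2).subset ?_
  rintro y ⟨hy, g, hgy⟩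
  rw [← orbit_smul g y] at hy
  exact Set.mem_biUnion ⟨hgy, hy⟩ (mem_orbit_smul g y)

theorem smul_finiteOrbitsMeeting (g : G) :
    g • finiteOrbitsMeeting G S = finiteOrbitsMeeting G S := by
  ext y
  rw [Set.mem_smul_set_iff_inv_smul_mem]
  simp only [finiteOrbitsMeeting, Set.mem_ofPred_eq, orbit_smul]
  exact and_congr_right fun _ =>
    ⟨fun ⟨h, hh⟩ => ⟨h * g⁻¹, by rwa [mul_smul]⟩,
      fun ⟨h, hh⟩ => ⟨h * g, by rwa [mul_smul, smul_inv_smul]⟩⟩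

theorem finiteOrbitsMeeting_subset {T : Set X} (hST : S ⊆ T)
    (hT : ∀ g : G, ∀ x, g • x ∈ T → x ∈ T) :
    finiteOrbitsMeeting G S ⊆ T :=
  fun _ ⟨_, g, hg⟩ => hT g _ (hST hg)

theorem exists_smul_notMem_of_disjoint_finiteOrbitsMeeting (hS : S.Finite) {F : Set X}
    (hF : F.Finite) (hFS : Disjoint F (finiteOrbitsMeeting G S)) :
    ∃ g : G, ∀ x ∈ F, g • x ∉ S := by
  obtain ⟨g, hg⟩ := exists_smul_notMem_of_orbit_infinite_s16 (G := G)
    (F := F ∩ {x | (orbit G x).Infinite}) hS (hF.subset Set.inter_subset_left) fun _ hx => hx.2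
  refine ⟨g, fun x hxF hgx => ?_⟩
  by_cases hx : (orbit G x).Finite
  · exact hFS.notMem_of_mem_left hxF ⟨hx, g, hgx⟩
  · exact hg x ⟨hxF, hx⟩ hgx

end MulAction

namespace SimpleGraph

variable {V : Type*} {G : SimpleGraph V}

theorem Iso.smul_mem_edgeSet_iff (φ : G ≃g G) {e : Sym2 V} : φ • e ∈ G.edgeSet ↔ e ∈ G.edgeSet :=
  Iso.map_mem_edgeSet_iff φ

theorem locallyEmbeds_deleteEdges_of_exists_smul_notMem {H N : Set (Sym2 V)}
    (h : ∀ F : Set (Sym2 V), F.Finite → Disjoint F H → ∃ φ : G ≃g G, ∀ e ∈ F, φ • e ∉ N) :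
    LocallyEmbeds (G.deleteEdges H) (G.deleteEdges N) := by
  intro W _ Γ ⟨f, hf⟩
  have hfH : ∀ e ∈ Γ.edgeSet, Sym2.map f e ∈ G.edgeSet ∧ Sym2.map f e ∉ H := fun e he => by
    simpa only [edgeSet_deleteEdges, Set.mem_sdiff] using f.map_mem_edgeSet he
  obtain ⟨φ, hφ⟩ := h (Sym2.map f '' Γ.edgeSet) (Set.toFinite _)
    (Set.disjoint_left.mpr fun _ ⟨e, he, hfe⟩ => hfe ▸ (hfH e he).2)
  refine ⟨⟨fun w => φ (f w), fun {a b} hab => ?_⟩, φ.injective.comp hf⟩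
  have hfab := hfH s(a, b) hab
  rw [deleteEdges_adj]
  exact ⟨φ.map_adj_iff.mpr hfab.1, hφ _ ⟨s(a, b), hab, rfl⟩⟩

end SimpleGraph

/-- **Local-embeddability theorem.** For any graph `G` and any finite set `N̄` of its edges,
there is a finite set `H̄` of edges of `G`, invariant under all automorphisms of `G`, such
that `G ∖ H̄` locally embeds into `G ∖ N̄`. -/
theorem stmt_16 {V : Type*} (G : SimpleGraph V)
    (N' : Finset (Sym2 V)) (hN'sub : ↑N' ⊆ G.edgeSet) :
    ∃ H' : Finset (Sym2 V), ↑H' ⊆ G.edgeSet ∧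
      (∀ φ : G ≃g G, Sym2.map ⇑φ '' ↑H' = (↑H' : Set (Sym2 V))) ∧
      LocallyEmbeds (G.deleteEdges ↑H') (G.deleteEdges ↑N') := by
  have hfin := finite_finiteOrbitsMeeting (G := G ≃g G) N'.finite_toSet
  refine ⟨hfin.toFinset, ?_⟩
  rw [hfin.coe_toFinset]
  refine ⟨?_, smul_finiteOrbitsMeeting, ?_⟩
  · exact finiteOrbitsMeeting_subset hN'sub fun φ _ => (SimpleGraph.Iso.smul_mem_edgeSet_iff φ).mp
  · exact SimpleGraph.locallyEmbeds_deleteEdges_of_exists_smul_notMem fun _ hF hFH =>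
      exists_smul_notMem_of_disjoint_finiteOrbitsMeeting N'.finite_toSet hF hFH
end

section
/- Let G be the simple graph with vertex set ℤ in which two integers i and j are adjacent if and only if |i − j| = 1, and let N be the graph obtained from G by deleting the single edge {0,1}. Then there is no finite set H̄ of edges of G, invariant under every automorphism of G (every automorphism of G maps the set of edges H̄ onto itself), such that the graph obtained from G by deleting the edges in H̄ admits an injective graph homomorphism into N. -/
/-- The bi-infinite path graph: vertex set `ℤ`, with `i` and `j` adjacent iff `|i - j| = 1`. -/
def lineGraph : SimpleGraph ℤ where
  Adj i j := |i - j| = 1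
  symm := by
    constructor
    intro i j h
    rwa [abs_sub_comm]
  loopless := by
    constructor
    intro i h
    simp at h

/-!
Translations `n ↦ n + k` are automorphisms of the path, and a nonempty set of edges invariant
under all of them contains the infinitely many translates of one edge; so `H̄` is empty. An
injective self-map of the path preserving adjacency has all its steps `f (n + 1) - f n` equal
to `±1`, and two consecutive steps cannot cancel since `f (n + 2) ≠ f n`. Hence `f` is
`n ↦ f 0 ± n`, which is onto and so maps some edge onto `{0, 1}`, the edge missing in `N`.
-/

namespace lineGraph

lemma adj_add_one (n : ℤ) : lineGraph.Adj n (n + 1) := by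
  show |n - (n + 1)| = 1
  simp

def translate (k : ℤ) : lineGraph ≃g lineGraph where
  toEquiv := Equiv.addRight k
  map_rel_iff' {i j} := by
    show |i + k - (j + k)| = 1 ↔ |i - j| = 1
    rw [add_sub_add_right_eq_sub]

lemma eq_empty_of_forall_image_map_add_eq (S : Finset (Sym2 ℤ))
    (hS : ∀ k : ℤ, Sym2.map (· + k) '' ↑S = (↑S : Set (Sym2 ℤ))) : S = ∅ := by
  by_contra hne
  obtain ⟨e, he⟩ := Finset.nonempty_iff_ne_empty.mpr hne
  induction e using Sym2.ind with
  | _ a b =>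
  have htranslates : Set.range (fun k : ℤ => s(a + k, b + k)) ⊆ ↑S := by
    rintro _ ⟨k, rfl⟩
    rw [← hS k]
    exact ⟨s(a, b), he, Sym2.map_mk _ _ _⟩
  have hinj : Function.Injective (fun k : ℤ => s(a + k, b + k)) := by
    intro m n h
    rcases Sym2.eq_iff.mp h with ⟨h1, -⟩ | ⟨h1, h2⟩ <;> omega
  exact S.finite_toSet.not_infinite ((Set.infinite_range_of_injective hinj).mono htranslates)

lemma abs_sub_map_add_one (f : lineGraph →g lineGraph) (n : ℤ) : |f (n + 1) - f n| = 1 := by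
  rw [abs_sub_comm]
  exact f.map_adj (adj_add_one n)

lemma exists_eq_add_mul_of_injective {f : lineGraph →g lineGraph} (hf : Function.Injective f) :
    ∃ ε : ℤ, |ε| = 1 ∧ ∀ n, f n = f 0 + ε * n := by
  set d : ℤ → ℤ := fun n => f (n + 1) - f n with hd
  have hstep (n : ℤ) : d n = 1 ∨ d n = -1 := (abs_eq zero_le_one).mp (abs_sub_map_add_one f n)
  -- two opposite consecutive steps would give `f (n + 2) = f n`
  have hd_periodic : Function.Periodic d 1 := by
    intro n
    by_contra hne
    have hback : f (n + 1 + 1) = f n := by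
      rcases hstep n with h | h <;> rcases hstep (n + 1) with h' | h' <;> simp only [hd] at * <;>
        omega
    have := hf hback
    omega
  have hd_const (n : ℤ) : d n = d 0 := by simpa using hd_periodic.int_mul_eq n
  have hg_periodic : Function.Periodic (fun n => f n - d 0 * n) 1 := by
    intro n
    have := hd_const n
    simp only [hd] at this
    linarith
  refine ⟨d 0, (abs_eq zero_le_one).mpr (hstep 0), fun n => ?_⟩
  have := hg_periodic.int_mul_eq n
  simp only [mul_one, Int.cast_id, mul_zero, sub_zero] at this
  linarith

lemma exists_map_eq_zero_one_of_injective {f : lineGraph →g lineGraph}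
    (hf : Function.Injective f) : ∃ n, s(f n, f (n + 1)) = s(0, 1) := by
  obtain ⟨ε, hε, hf⟩ := exists_eq_add_mul_of_injective hf
  rcases (abs_eq zero_le_one).mp hε with rfl | rfl
  · exact ⟨-f 0, by rw [hf, hf (-f 0 + 1)]; congr 1 <;> ring⟩
  · refine ⟨f 0 - 1, ?_⟩
    rw [hf, hf (f 0 - 1 + 1), Sym2.eq_swap]
    congr 1 <;> ring

end lineGraph

/-- It is impossible to remove a finite set of edges from the bi-infinite path graph,
invariant under all of its automorphisms, so that the resulting graph admits an injective
graph homomorphism into the graph obtained by deleting the single edge `{0, 1}`. -/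
theorem stmt_17 :
    ¬ ∃ H' : Finset (Sym2 ℤ), ↑H' ⊆ lineGraph.edgeSet ∧
        (∀ φ : lineGraph ≃g lineGraph, Sym2.map ⇑φ '' ↑H' = (↑H' : Set (Sym2 ℤ))) ∧
        ∃ f : lineGraph.deleteEdges ↑H' →g lineGraph.deleteEdges {s(0, 1)},
          Function.Injective f := by
  rintro ⟨H', -, hinv, f, hf⟩
  obtain rfl : H' = ∅ :=
    lineGraph.eq_empty_of_forall_image_map_add_eq H' fun k => hinv (lineGraph.translate k)
  let g : lineGraph →g lineGraph :=
    (SimpleGraph.Hom.ofLE (lineGraph.deleteEdges_le _)).comp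
      (f.comp (SimpleGraph.Hom.ofLE (by simp)))
  obtain ⟨n, hn⟩ := lineGraph.exists_map_eq_zero_one_of_injective (f := g) hf
  have hadj : (lineGraph.deleteEdges ↑(∅ : Finset (Sym2 ℤ))).Adj n (n + 1) := by
    simpa using lineGraph.adj_add_one n
  exact (SimpleGraph.deleteEdges_adj.mp (f.map_adj hadj)).2 hn
end

section
/- Let X be a finite set with exactly 10^100 elements, equipped with a binary relation R (read 'R x y' as 'x respects y'). Call a subset S of X efficient if for any five pairwise distinct elements x₁,…,x₅ of S there is an index i ∈ {1,…,5} such that R x_j x_i holds for at least three indices j ∈ {1,…,5}. Suppose there is a subset E of X with at most 10 elements such that X \ E is efficient. Then there exists a subset E' of X, invariant under every bijection σ of X preserving R (i.e., R x y holds if and only if R (σ x) (σ y) holds, for all x, y), such that X \ E' is efficient and nonempty. -/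
/-!
`X \ F` is efficient exactly when `F` meets every *bad* 5-tuple (injective, nobody respected by
three of the five). Take `E'` to be the union of all inclusion-minimal such hitting sets of size
at most 10. It is defined from `R` alone, so every automorphism of `R` preserves it; it contains
a minimal hitting set inside `E`, so `X \ E'` is efficient. Branching on the five entries of a
bad tuple shows that all minimal hitting sets of size at most `k` lie in a set of fewer than
`6 ^ k` points, so `E'` is far from all of `X`.
-/

/-- A subset `S` of the candidates is *efficient* if among any five pairwise distinct
members of `S` there is one who is respected (relation `R`) by at least three of the five. -/
def Efficient {X : Type*} (R : X → X → Prop) (S : Set X) : Prop :=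
  ∀ x : Fin 5 → X, Function.Injective x → (∀ i, x i ∈ S) →
    ∃ i : Fin 5, 3 ≤ {j : Fin 5 | R (x j) (x i)}.ncard

section HittingSets

variable {X ι : Type*} {P : (ι → X) → Prop} {F G : Set X}

def Hits (P : (ι → X) → Prop) (F : Set X) : Prop :=
  ∀ x, P x → ∃ i, x i ∈ F

theorem Hits.mono (hF : Hits P F) (hFG : F ⊆ G) : Hits P G := fun x hx =>
  (hF x hx).imp fun _ hi => hFG hi

theorem hits_image_equiv_iff (e : X ≃ X) (hP : ∀ x, P (e ∘ x) ↔ P x) :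
    Hits P (e '' F) ↔ Hits P F := by
  refine ⟨fun h x hx => ?_, fun h y hy => ?_⟩
  · obtain ⟨i, hi⟩ := h (e ∘ x) ((hP x).2 hx)
    exact ⟨i, e.injective.mem_set_image.1 hi⟩
  · obtain ⟨i, hi⟩ := h (e.symm ∘ y) ((hP _).1 (by simpa [Function.comp_def] using hy))
    exact ⟨i, e.symm (y i), hi, e.apply_symm_apply _⟩

theorem minimal_hits_image_equiv_iff (e : X ≃ X) (hP : ∀ x, P (e ∘ x) ↔ P x) :
    Minimal (Hits P) (e '' F) ↔ Minimal (Hits P) F := by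
  have := e.toOrderIsoSet.toOrderEmbedding.minimal_apply_mem_iff (t := {G | Hits P G}) (x := F)
    (by simp [e.toOrderIsoSet.surjective.range_eq])
  simpa [hits_image_equiv_iff e hP] using this

theorem Minimal.hits_sdiff_singleton (hF : Minimal (Hits P) F) {a : X} (ha : a ∈ F) :
    Minimal (Hits fun x => P x ∧ ∀ i, x i ≠ a) (F \ {a}) := by
  refine ⟨fun x ⟨hx, hxa⟩ => (hF.prop x hx).imp fun i hi => ⟨hi, hxa i⟩,
    fun G hG hGF => ?_⟩
  have hGa : Hits P (insert a G) := fun x hx => by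
    by_cases hxa : ∃ i, x i = a
    · exact hxa.imp fun i hi => Or.inl hi
    · push Not at hxa
      exact (hG x ⟨hx, hxa⟩).imp fun i hi => Or.inr hi
  have hFG := hF.le_of_le hGa (Set.insert_subset ha (hGF.trans Set.sdiff_subset))
  exact fun v ⟨hvF, hva⟩ => (hFG hvF).resolve_left hva

/-- Branching on the entries of one `P`-tuple: every minimal hitting set contains one of them,
and removing it leaves a minimal hitting set of a smaller problem. -/
theorem exists_finset_card_lt_forall_minimal_hits_subset [Fintype ι] (k : ℕ)
    (P : (ι → X) → Prop) : ∃ W : Finset X, W.card < (Fintype.card ι + 1) ^ k ∧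
      ∀ F, Minimal (Hits P) F → F.encard ≤ k → F ⊆ W := by
  classical
  induction k generalizing P with
  | zero =>
    refine ⟨∅, by simp, fun F _ hF => ?_⟩
    simp [Set.encard_eq_zero.1 (nonpos_iff_eq_zero.1 (by exact_mod_cast hF))]
  | succ k ih =>
    by_cases hP : ∃ x, P x
    swap
    · push Not at hP
      refine ⟨∅, by simp, fun F hF _ => ?_⟩
      simpa using hF.le_of_le (fun x hx => (hP x hx).elim) (Set.empty_subset F)
    obtain ⟨x₀, hx₀⟩ := hP
    choose W hWcard hW using fun i => ih fun x => P x ∧ ∀ j, x j ≠ x₀ i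
    refine ⟨Finset.univ.image x₀ ∪ Finset.univ.biUnion W, ?_, fun F hF hFk v hv => ?_⟩
    · have hx₀card : (Finset.univ.image x₀).card ≤ Fintype.card ι := Finset.card_image_le
      have hWsum : ∑ i, ((W i).card + 1) ≤ ∑ _i : ι, (Fintype.card ι + 1) ^ k :=
        Finset.sum_le_sum fun i _ => hWcard i
      rw [Finset.sum_add_distrib, Finset.sum_const, Finset.sum_const, Finset.card_univ,
        smul_eq_mul, smul_eq_mul, mul_one] at hWsum
      have := Finset.card_union_le (Finset.univ.image x₀) (Finset.univ.biUnion W)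
      have := Finset.card_biUnion_le (s := Finset.univ) (t := W)
      have : 0 < (Fintype.card ι + 1) ^ k := by positivity
      rw [pow_succ, mul_add_one, mul_comm]
      omega
    · obtain ⟨i, hi⟩ := hF.prop x₀ hx₀
      by_cases hvi : v = x₀ i
      · simp [hvi]
      have hFk' : (F \ {x₀ i}).encard ≤ k := by
        rw [← Set.encard_sdiff_singleton_add_one hi] at hFk
        exact (ENat.add_le_add_iff_right ENat.one_ne_top).1 (by exact_mod_cast hFk)
      have := hW i _ (hF.hits_sdiff_singleton hi) hFk' ⟨hv, hvi⟩
      simp only [Finset.coe_union, Finset.coe_biUnion]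
      exact Or.inr (Set.mem_biUnion (Finset.mem_coe.2 (Finset.mem_univ i)) this)

def minimalHittingUnion (P : (ι → X) → Prop) (k : ℕ) : Set X :=
  {v | ∃ F, Minimal (Hits P) F ∧ F.encard ≤ k ∧ v ∈ F}

theorem ncard_minimalHittingUnion_lt [Fintype ι] (P : (ι → X) → Prop) (k : ℕ) :
    (minimalHittingUnion P k).ncard < (Fintype.card ι + 1) ^ k := by
  obtain ⟨W, hWcard, hW⟩ := exists_finset_card_lt_forall_minimal_hits_subset k P
  calc (minimalHittingUnion P k).ncard
      ≤ (W : Set X).ncard :=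
        Set.ncard_le_ncard (fun v ⟨F, hF, hFk, hv⟩ => hW F hF hFk hv) W.finite_toSet
    _ = W.card := Set.ncard_coe_finset W
    _ < _ := hWcard

theorem hits_minimalHittingUnion [Finite X] {k : ℕ} (hF : Hits P F) (hFk : F.encard ≤ k) :
    Hits P (minimalHittingUnion P k) := by
  obtain ⟨G, hGF, hG⟩ := exists_minimal_le_of_wellFoundedLT (Hits P) F hF
  exact hG.prop.mono fun v hv => ⟨G, hG, (Set.encard_le_encard hGF).trans hFk, hv⟩

theorem image_minimalHittingUnion (e : X ≃ X) (hP : ∀ x, P (e ∘ x) ↔ P x) (k : ℕ) :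
    e '' minimalHittingUnion P k = minimalHittingUnion P k := by
  have hP_symm : ∀ x, P (e.symm ∘ x) ↔ P x := fun x => by
    simpa [Function.comp_def] using (hP (e.symm ∘ x)).symm
  apply Set.Subset.antisymm
  · rintro _ ⟨v, ⟨F, hF, hFk, hv⟩, rfl⟩
    exact ⟨e '' F, (minimal_hits_image_equiv_iff e hP).2 hF,
      (e.injective.encard_image F).trans_le hFk, Set.mem_image_of_mem e hv⟩
  · rintro v ⟨F, hF, hFk, hv⟩
    refine ⟨e.symm v, ⟨e.symm '' F, (minimal_hits_image_equiv_iff e.symm hP_symm).2 hF,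
      (e.symm.injective.encard_image F).trans_le hFk, Set.mem_image_of_mem e.symm hv⟩,
      e.apply_symm_apply v⟩

end HittingSets

section Efficiency

variable {X : Type*} {R : X → X → Prop}

def IsBadTuple (R : X → X → Prop) (x : Fin 5 → X) : Prop :=
  Function.Injective x ∧ ∀ i, {j | R (x j) (x i)}.ncard < 3

theorem efficient_compl_iff_hits {F : Set X} : Efficient R Fᶜ ↔ Hits (IsBadTuple R) F := by
  refine ⟨fun h x ⟨hx, hbad⟩ => ?_, fun h x hx hxF => ?_⟩
  · by_contra! hxF
    obtain ⟨i, hi⟩ := h x hx hxF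
    exact (hbad i).not_ge hi
  · by_contra! hbad
    obtain ⟨i, hi⟩ := h x ⟨hx, hbad⟩
    exact hxF i hi

theorem isBadTuple_comp_iff (e : X ≃ X) (hR : ∀ x y, R x y ↔ R (e x) (e y))
    (x : Fin 5 → X) : IsBadTuple R (e ∘ x) ↔ IsBadTuple R x := by
  simp only [IsBadTuple, Function.comp_apply, ← hR, e.injective.of_comp_iff]

end Efficiency

/-- **Problem 2.** With `10^100` candidates, if expelling some set of at most ten candidates
leaves an efficient team, then there is a set `E'` of candidates, invariant under every
bijection preserving the relation "respects", whose removal leaves a nonempty efficient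
team. -/
theorem stmt_19 {X : Type*} [Fintype X] (hcard : Fintype.card X = 10 ^ 100)
    (R : X → X → Prop) (E : Set X) (hE : E.ncard ≤ 10) (heff : Efficient R Eᶜ) :
    ∃ E' : Set X,
      (∀ σ : X → X, Function.Bijective σ → (∀ x y, R x y ↔ R (σ x) (σ y)) →
        σ '' E' = E') ∧
      Efficient R E'ᶜ ∧ E'ᶜ.Nonempty := by
  refine ⟨minimalHittingUnion (IsBadTuple R) 10, fun σ hσ hR =>
    image_minimalHittingUnion (.ofBijective σ hσ) (isBadTuple_comp_iff _ hR) 10, ?_, ?_⟩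
  · have hE' : E.encard ≤ 10 := by
      rw [← E.toFinite.cast_ncard_eq]
      exact_mod_cast hE
    exact efficient_compl_iff_hits.2
      (hits_minimalHittingUnion (efficient_compl_iff_hits.1 heff) hE')
  · rw [Set.nonempty_compl]
    intro h
    have := ncard_minimalHittingUnion_lt (IsBadTuple R) 10
    rw [h, Set.ncard_univ, Nat.card_eq_fintype_card, hcard, Fintype.card_fin] at this
    norm_num at this
end
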